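/- arXiv:2507.01475 — 12 statements merged into one kernel-verified Lean document; each statement's English description precedes it below -/
import Mathlib

section
/- If g : [t₀, ∞) → ℝ is C² with g'(t) > 0 and g''(t) > 0 for all t ≥ t₀, and t·g'(t) → ∞ as t → ∞, and g'(t)²/(g(t)·g''(t)) → q for some q ∈ [1, ∞), then g(t) → ∞ and g'(t) → ∞ as t → ∞. -/
open Filter Topology

/-- If `g` is C² on `[t₀, ∞)` with `g' > 0`, `g'' > 0`, `t·g'(t) → ∞`, and
`g'(t)²/(g(t)·g''(t)) → q` for some `q ≥ 1`, then `g(t) → ∞` and `g'(t) → ∞`. -/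
theorem stmt0 (t₀ q : ℝ) (ht₀ : 0 ≤ t₀) (g : ℝ → ℝ)
    (hg : ContDiffOn ℝ 2 g (Set.Ici t₀))
    (hg' : ∀ t ≥ t₀, 0 < deriv g t)
    (hg'' : ∀ t ≥ t₀, 0 < deriv (deriv g) t)
    (htg' : Tendsto (fun t => t * deriv g t) atTop atTop)
    (hq : 1 ≤ q)
    (hratio : Tendsto (fun t => (deriv g t) ^ 2 / (g t * deriv (deriv g) t)) atTop (𝓝 q)) :
    Tendsto g atTop atTop ∧ Tendsto (deriv g) atTop atTop := by
  have hgo : ContDiffOn ℝ 2 g (Set.Ioi t₀) := hg.mono Set.Ioi_subset_Ici_self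
  have hdg : ∀ t ∈ Set.Ioi t₀, HasDerivAt g (deriv g t) t := by
    intro t ht
    exact ((hgo.differentiableOn (by norm_num)).differentiableAt
      (Ioi_mem_nhds ht)).hasDerivAt
  have hdg' : ContDiffOn ℝ 1 (deriv g) (Set.Ioi t₀) :=
    hgo.deriv_of_isOpen isOpen_Ioi (by norm_num)
  have hddg : ∀ t ∈ Set.Ioi t₀, HasDerivAt (deriv g) (deriv (deriv g) t) t := by
    intro t ht
    exact ((hdg'.differentiableOn (by norm_num)).differentiableAt (Ioi_mem_nhds ht)).hasDerivAt
  have hcont' : ContinuousOn (deriv g) (Set.Ioi t₀) := hdg'.continuousOn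
  set t₁ := t₀ + 1 with ht₁def
  have ht01 : t₀ < t₁ := by simp [ht₁def]
  have hIci : Set.Ici t₁ ⊆ Set.Ioi t₀ := fun x hx => lt_of_lt_of_le ht01 hx
  -- g' is monotone on [t₁, ∞)
  have hmono : MonotoneOn (deriv g) (Set.Ici t₁) := by
    apply monotoneOn_of_deriv_nonneg (convex_Ici t₁) (hcont'.mono hIci)
    · intro x hx
      rw [interior_Ici, Set.mem_Ioi] at hx
      exact ((hddg x (hIci (le_of_lt hx))).differentiableAt).differentiableWithinAt
    · intro x hx
      rw [interior_Ici, Set.mem_Ioi] at hx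
      exact (hg'' x (by linarith [hx.le] : x ≥ t₀)).le
  have hc₀ : 0 < deriv g t₁ := hg' t₁ (by linarith)
  set c₀ := deriv g t₁ with hc₀def
  -- g grows at least linearly
  have hglb : ∀ t ≥ t₁, c₀ * t + (g t₁ - c₀ * t₁) ≤ g t := by
    intro t ht
    have hm : MonotoneOn (fun s => g s - c₀ * s) (Set.Ici t₁) := by
      apply monotoneOn_of_deriv_nonneg (convex_Ici t₁)
      · exact ((hg.continuousOn.mono (Set.Ici_subset_Ici.mpr ht01.le)).sub
          (continuous_const.mul continuous_id).continuousOn)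
      · intro x hx
        rw [interior_Ici, Set.mem_Ioi] at hx
        have hx' : x ∈ Set.Ioi t₀ := hIci hx.le
        exact (((hdg x hx').sub ((hasDerivAt_id x).const_mul c₀)).differentiableAt).differentiableWithinAt
      · intro x hx
        rw [interior_Ici, Set.mem_Ioi] at hx
        have hx' : x ∈ Set.Ioi t₀ := hIci hx.le
        have hd : deriv (fun s => g s - c₀ * s) x = deriv g x - c₀ := by
          have := ((hdg x hx').sub ((hasDerivAt_id x).const_mul c₀)).deriv
          simp only [id_eq, mul_one] at this
          exact this
        rw [hd]
        have := hmono Set.self_mem_Ici (Set.mem_Ici.mpr hx.le) hx.le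
        linarith
    have := hm Set.self_mem_Ici (Set.mem_Ici.mpr ht) ht
    simp only at this
    linarith
  have hgtop : Tendsto g atTop atTop := by
    apply tendsto_atTop_mono' atTop (eventually_atTop.2 ⟨t₁, hglb⟩)
    exact tendsto_atTop_add_const_right _ _ (tendsto_id.const_mul_atTop hc₀)
  refine ⟨hgtop, ?_⟩
  -- now show deriv g → ∞
  set φ : ℝ → ℝ := fun t => deriv g (max t t₁) with hφdef
  have hφmono : Monotone φ := fun a b hab =>
    hmono (Set.mem_Ici.mpr (le_max_right _ _)) (Set.mem_Ici.mpr (le_max_right _ _))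
      (max_le_max hab le_rfl)
  have hφeq : deriv g =ᶠ[atTop] φ :=
    eventually_atTop.2 ⟨t₁, fun t ht => by simp [hφdef, max_eq_left ht]⟩
  by_cases hbdd : BddAbove (Set.range φ)
  swap
  · exact (tendsto_atTop_atTop_of_monotone' hφmono hbdd).congr' hφeq.symm
  exfalso
  set L := ⨆ t, φ t with hLdef
  have hφL : Tendsto φ atTop (𝓝 L) := tendsto_atTop_ciSup hφmono hbdd
  have hL : Tendsto (deriv g) atTop (𝓝 L) := hφL.congr' hφeq.symm
  have hc₀L : c₀ ≤ L := by
    have := le_ciSup hbdd t₁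
    simpa [hφdef] using this
  have hLpos : 0 < L := lt_of_lt_of_le hc₀ hc₀L
  have hub : ∀ t ≥ t₁, deriv g t ≤ L := by
    intro t ht
    have := le_ciSup hbdd t
    simpa [hφdef, max_eq_left ht] using this
  -- g ≤ A + L t
  set A := g t₁ - L * t₁ with hAdef
  have hgub : ∀ t ≥ t₁, g t ≤ A + L * t := by
    intro t ht
    have hm : MonotoneOn (fun s => L * s - g s) (Set.Ici t₁) := by
      apply monotoneOn_of_deriv_nonneg (convex_Ici t₁)
      · exact ((continuous_const.mul continuous_id).continuousOn.sub
          (hg.continuousOn.mono (Set.Ici_subset_Ici.mpr ht01.le)))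
      · intro x hx
        rw [interior_Ici, Set.mem_Ioi] at hx
        have hx' : x ∈ Set.Ioi t₀ := hIci hx.le
        exact ((((hasDerivAt_id x).const_mul L).sub (hdg x hx')).differentiableAt).differentiableWithinAt
      · intro x hx
        rw [interior_Ici, Set.mem_Ioi] at hx
        have hx' : x ∈ Set.Ioi t₀ := hIci hx.le
        have hd : deriv (fun s => L * s - g s) x = L - deriv g x := by
          have := (((hasDerivAt_id x).const_mul L).sub (hdg x hx')).deriv
          simp only [id_eq, mul_one] at this
          exact this
        rw [hd]
        have := hub x hx.le
        linarith
    have := hm Set.self_mem_Ici (Set.mem_Ici.mpr ht) ht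
    simp only at this
    linarith
  -- g * g'' → L^2 / q
  have hq0 : (0:ℝ) < q := lt_of_lt_of_le one_pos hq
  have hsq : Tendsto (fun t => (deriv g t) ^ 2) atTop (𝓝 (L ^ 2)) := hL.pow 2
  have hdiv : Tendsto (fun t => (deriv g t) ^ 2 /
      ((deriv g t) ^ 2 / (g t * deriv (deriv g) t))) atTop (𝓝 (L ^ 2 / q)) :=
    hsq.div hratio (ne_of_gt hq0)
  have hratpos : ∀ᶠ t in atTop, (0:ℝ) <
      (deriv g t) ^ 2 / (g t * deriv (deriv g) t) :=
    hratio.eventually (eventually_gt_nhds hq0)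
  have heqden : ∀ᶠ t in atTop, (deriv g t) ^ 2 /
      ((deriv g t) ^ 2 / (g t * deriv (deriv g) t)) = g t * deriv (deriv g) t := by
    filter_upwards [hratpos, eventually_ge_atTop t₀] with t hr ht
    have hnum : (deriv g t) ^ 2 ≠ 0 := ne_of_gt (pow_pos (hg' t ht) 2)
    have hden : g t * deriv (deriv g) t ≠ 0 := by
      intro h
      rw [h, div_zero] at hr
      exact lt_irrefl 0 hr
    have hd0 : deriv g t ≠ 0 := ne_of_gt (hg' t ht)
    field_simp
  have hprod : Tendsto (fun t => g t * deriv (deriv g) t) atTop (𝓝 (L ^ 2 / q)) :=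
    hdiv.congr' heqden
  set c := L ^ 2 / (2 * q) with hcdef
  have hcpos : 0 < c := div_pos (pow_pos hLpos 2) (by positivity)
  have hclt : c < L ^ 2 / q := by
    rw [hcdef, div_lt_div_iff₀ (by positivity) (by positivity)]
    nlinarith [sq_nonneg L]
  have hev : ∀ᶠ t in atTop, c < g t * deriv (deriv g) t :=
    hprod.eventually (eventually_gt_nhds hclt)
  have hgpos : ∀ᶠ t in atTop, (0:ℝ) < g t := hgtop.eventually_gt_atTop 0
  obtain ⟨T, hT⟩ := eventually_atTop.1
    ((hev.and hgpos).and (eventually_ge_atTop t₁))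
  have hTt₁ : T ≤ max T t₁ := le_max_left _ _
  -- replace T by max T t₁ so that T ≥ t₁
  set T' := max T t₁ with hT'def
  have hT' : ∀ t ≥ T', c < g t * deriv (deriv g) t ∧ 0 < g t ∧ t₁ ≤ t := by
    intro t ht
    have h1 := hT t (le_trans (le_max_left _ _) ht)
    exact ⟨h1.1.1, h1.1.2, h1.2⟩
  have hT'1 : t₁ ≤ T' := le_max_right _ _
  have hALpos : ∀ t ≥ T', 0 < A + L * t := by
    intro t ht
    have h := hT' t ht
    exact lt_of_lt_of_le h.2.1 (hgub t h.2.2)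
  -- F t = g' t - (c/L) log (A + L t) is monotone on [T', ∞)
  set F : ℝ → ℝ := fun t => deriv g t - (c / L) * Real.log (A + L * t) with hFdef
  have haff : ∀ x, HasDerivAt (fun t => A + L * t) L x := by
    intro x
    have := ((hasDerivAt_id' x).const_mul L).const_add A
    simpa using this
  have hFm : MonotoneOn F (Set.Ici T') := by
    apply monotoneOn_of_deriv_nonneg (convex_Ici T')
    · apply ContinuousOn.sub
      · exact hcont'.mono (fun x hx => hIci (le_trans hT'1 hx))
      · apply ContinuousOn.const_smul ?_ (c / L) |>.congr (fun x hx => rfl)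
        apply ContinuousOn.log
        · exact (continuous_const.add (continuous_const.mul continuous_id)).continuousOn
        · intro x hx
          exact ne_of_gt (hALpos x hx)
    · intro x hx
      rw [interior_Ici, Set.mem_Ioi] at hx
      have hx1 : x ∈ Set.Ioi t₀ := hIci (le_trans hT'1 hx.le)
      have hne : A + L * x ≠ 0 := ne_of_gt (hALpos x hx.le)
      exact (((hddg x hx1).sub
        (((haff x).log hne).const_mul (c / L))).differentiableAt).differentiableWithinAt
    · intro x hx
      rw [interior_Ici, Set.mem_Ioi] at hx
      have hx1 : x ∈ Set.Ioi t₀ := hIci (le_trans hT'1 hx.le)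
      have hAL : 0 < A + L * x := hALpos x hx.le
      have hne : A + L * x ≠ 0 := ne_of_gt hAL
      have hd : deriv F x = deriv (deriv g) x - (c / L) * (L / (A + L * x)) := by
        have := ((hddg x hx1).sub (((haff x).log hne).const_mul (c / L))).deriv
        exact this
      rw [hd]
      have hsimp : (c / L) * (L / (A + L * x)) = c / (A + L * x) := by
        field_simp
      rw [hsimp]
      have h := hT' x hx.le
      have hgx : 0 < g x := h.2.1
      have h1 : c / g x < deriv (deriv g) x := by
        rw [div_lt_iff₀ hgx]
        nlinarith [h.1]
      have h2 : c / (A + L * x) ≤ c / g x :=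
        div_le_div_of_nonneg_left hcpos.le hgx (hgub x h.2.2)
      linarith
  -- F T' ≤ F t gives g' t ≥ F T' + (c/L) log(A + L t) → ∞, contradicting g' ≤ L
  have hlogtop : Tendsto (fun t => F T' + (c / L) * Real.log (A + L * t)) atTop atTop := by
    apply tendsto_atTop_add_const_left
    apply Tendsto.const_mul_atTop (by positivity : (0:ℝ) < c / L)
    exact Real.tendsto_log_atTop.comp
      (tendsto_atTop_add_const_left _ _ (tendsto_id.const_mul_atTop hLpos))
  obtain ⟨t, ht1, ht2⟩ := ((hlogtop.eventually_gt_atTop L).and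
    (eventually_ge_atTop T')).exists
  have h3 := hFm Set.self_mem_Ici (Set.mem_Ici.mpr ht2) ht2
  have h4 : deriv g t ≤ L := hub t (le_trans hT'1 ht2)
  simp only [hFdef] at h3
  linarith
end

section
/- If g : [t₀, ∞) → ℝ is C² with g', g'' > 0, g(t) → ∞, g'(t) → ∞, and g'(t)²/(g(t)·g''(t)) → q ∈ [1, ∞) as t → ∞, then (log g'(t))/g(t) → 0 as t → ∞. -/
open Filter Topology

/-- If `g` is C² on `[t₀, ∞)` with `g', g'' > 0`, `g(t) → ∞`, `g'(t) → ∞`, and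
`g'(t)²/(g(t)·g''(t)) → q ∈ [1, ∞)`, then `(log g'(t))/g(t) → 0`. -/
theorem stmt1 (t₀ q : ℝ) (ht₀ : 0 ≤ t₀) (g : ℝ → ℝ)
    (hg : ContDiffOn ℝ 2 g (Set.Ici t₀))
    (hg' : ∀ t ≥ t₀, 0 < deriv g t)
    (hg'' : ∀ t ≥ t₀, 0 < deriv (deriv g) t)
    (hgtop : Tendsto g atTop atTop)
    (hg'top : Tendsto (deriv g) atTop atTop)
    (hq : 1 ≤ q)
    (hratio : Tendsto (fun t => (deriv g t) ^ 2 / (g t * deriv (deriv g) t)) atTop (𝓝 q)) :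
    Tendsto (fun t => Real.log (deriv g t) / g t) atTop (𝓝 0) := by
  -- differentiability facts on the open set Ioi t₀
  have hgs : ContDiffOn ℝ 2 g (Set.Ioi t₀) := hg.mono Set.Ioi_subset_Ici_self
  have hgd : ∀ x ∈ Set.Ioi t₀, DifferentiableAt ℝ g x := fun x hx =>
    (hgs.differentiableOn (by norm_num) x hx).differentiableAt (isOpen_Ioi.mem_nhds hx)
  have hg'cd : ContDiffOn ℝ 1 (deriv g) (Set.Ioi t₀) :=
    hgs.deriv_of_isOpen isOpen_Ioi (by norm_num)
  have hg'd : ∀ x ∈ Set.Ioi t₀, DifferentiableAt ℝ (deriv g) x := fun x hx =>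
    (hg'cd.differentiableOn (by norm_num) x hx).differentiableAt (isOpen_Ioi.mem_nhds hx)
  -- pick T
  have hev : ∀ᶠ t in atTop, (1 ≤ g t ∧ 1 ≤ deriv g t) ∧
      ((1:ℝ)/2 < (deriv g t) ^ 2 / (g t * deriv (deriv g) t) ∧ t₀ < t) :=
    ((hgtop.eventually_ge_atTop 1).and (hg'top.eventually_ge_atTop 1)).and
      ((hratio.eventually (lt_mem_nhds (by linarith))).and (eventually_gt_atTop t₀))
  obtain ⟨T, hT⟩ := eventually_atTop.mp hev
  have hTall : ∀ t ≥ T, 1 ≤ g t ∧ 1 ≤ deriv g t ∧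
      (1:ℝ)/2 < (deriv g t) ^ 2 / (g t * deriv (deriv g) t) ∧ t₀ < t := by
    intro t ht; obtain ⟨⟨a, b⟩, c, d⟩ := hT t ht; exact ⟨a, b, c, d⟩
  have hT0 : t₀ < T := (hTall T le_rfl).2.2.2
  -- the comparison function
  set φ : ℝ → ℝ := fun t => 2 * Real.log (g t) - Real.log (deriv g t) with hφ
  have hsub : Set.Ici T ⊆ Set.Ioi t₀ := fun x hx => lt_of_lt_of_le hT0 hx
  have hmono : MonotoneOn φ (Set.Ici T) := by
    apply monotoneOn_of_deriv_nonneg (convex_Ici T)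
    · apply ContinuousOn.sub
      · exact ((hg.continuousOn.mono (fun x hx => Set.mem_Ici.mpr (le_of_lt (hsub hx)))).log
          (fun x hx => by have := (hTall x hx).1; positivity)).const_smul (2:ℝ) |>.congr
          (fun x _ => by simp [smul_eq_mul])
      · exact (hg'cd.continuousOn.mono hsub).log
          (fun x hx => by have := (hTall x hx).2.1; positivity)
    · rw [interior_Ici]
      intro x hx
      have hx' : x ∈ Set.Ioi t₀ := hsub (Set.mem_Ici.mpr (le_of_lt hx))
      exact (((hgd x hx').log (by have := (hTall x (le_of_lt hx)).1; positivity)).const_mul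
        2).sub ((hg'd x hx').log (by have := (hTall x (le_of_lt hx)).2.1; positivity))
        |>.differentiableWithinAt
    · rw [interior_Ici]
      intro x hx
      have hxT : T ≤ x := le_of_lt hx
      have hx' : x ∈ Set.Ioi t₀ := hsub hxT
      obtain ⟨ha1, hb1, hr, _⟩ := hTall x hxT
      have ha : 0 < g x := by linarith
      have hb : 0 < deriv g x := by linarith
      have hc : 0 < deriv (deriv g) x := hg'' x (le_of_lt hx')
      have hd : HasDerivAt φ (2 * (deriv g x / g x) -
          deriv (deriv g) x / deriv g x) x :=
        (((hgd x hx').hasDerivAt.log (ne_of_gt ha)).const_mul 2).sub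
          ((hg'd x hx').hasDerivAt.log (ne_of_gt hb))
      rw [hd.deriv]
      have hlt : (1/2 : ℝ) * (g x * deriv (deriv g) x) < (deriv g x) ^ 2 := by
        rwa [lt_div_iff₀ (by positivity)] at hr
      rw [sub_nonneg]
      have h2 : 2 * (deriv g x / g x) = (2 * deriv g x) / g x := by ring
      rw [h2, div_le_div_iff₀ hb ha]
      nlinarith
  -- the bound
  set K : ℝ := Real.log (deriv g T) - 2 * Real.log (g T) with hK
  have hbound : ∀ t ≥ T, Real.log (deriv g t) ≤ 2 * Real.log (g t) + K := by
    intro t ht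
    have := hmono (Set.self_mem_Ici) (Set.mem_Ici.mpr ht) ht
    simp only [hφ] at this
    rw [hK]; linarith
  -- squeeze
  have hupper : Tendsto (fun t => (2 * Real.log (g t) + K) / g t) atTop (𝓝 0) := by
    have hlog : Tendsto (fun x : ℝ => Real.log x / x) atTop (𝓝 0) :=
      Real.isLittleO_log_id_atTop.tendsto_div_nhds_zero
    have h1 : Tendsto (fun t => Real.log (g t) / g t) atTop (𝓝 0) := hlog.comp hgtop
    have h2 : Tendsto (fun t => (g t)⁻¹) atTop (𝓝 0) := hgtop.inv_tendsto_atTop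
    have := (h1.const_mul 2).add (h2.const_mul K)
    simp only [mul_zero, add_zero] at this
    convert this using 2 with t
    ring
  apply tendsto_of_tendsto_of_tendsto_of_le_of_le' tendsto_const_nhds hupper
  · filter_upwards [eventually_ge_atTop T] with t ht
    obtain ⟨ha1, hb1, _, _⟩ := hTall t ht
    exact div_nonneg (Real.log_nonneg hb1) (by linarith)
  · filter_upwards [eventually_ge_atTop T] with t ht
    obtain ⟨ha1, _, _, _⟩ := hTall t ht
    exact div_le_div_of_nonneg_right (hbound t ht) (by linarith) |>.trans_eq rfl
end

section
/- Suppose g ∈ C²([t₀,∞)) with g', g'' > 0, g(t) → ∞ and t·g'(t) → ∞ as t → ∞, and the limits q = lim_{t→∞} g'(t)²/(g(t)g''(t)) and p = lim_{t→∞} t·g'(t)/g(t) both exist (q ∈ [1,∞), p ∈ (1,∞]). Then 1/p + 1/q = 1 (where 1/∞ = 0). -/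
open Filter Topology

private lemma monoIci {T : ℝ} {f f' : ℝ → ℝ}
    (h : ∀ t ∈ Set.Ici T, HasDerivAt f (f' t) t)
    (h0 : ∀ t ∈ Set.Ici T, 0 ≤ f' t) : MonotoneOn f (Set.Ici T) := by
  apply monotoneOn_of_hasDerivWithinAt_nonneg (f' := f') (convex_Ici T)
    (fun t ht => (h t ht).continuousAt.continuousWithinAt)
  · intro t ht
    rw [interior_Ici] at ht
    exact (h t (Set.mem_Ici.mpr (le_of_lt (Set.mem_Ioi.mp ht)))).hasDerivWithinAt
  · intro t ht
    rw [interior_Ici] at ht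
    exact h0 t (Set.mem_Ici.mpr (le_of_lt (Set.mem_Ioi.mp ht)))

/-- If the limits `q = lim g'²/(g g'') ∈ [1,∞)` and `p = lim t·g'/g ∈ (1,∞]` exist,
then `1/p + 1/q = 1` (where `1/∞ = 0`, encoded via `ℝ≥0∞`). -/
theorem stmt2 (t₀ q : ℝ) (p : ENNReal) (g : ℝ → ℝ)
    (hg : ContDiffOn ℝ 2 g (Set.Ici t₀))
    (hg' : ∀ t ≥ t₀, 0 < deriv g t)
    (hg'' : ∀ t ≥ t₀, 0 < deriv (deriv g) t)
    (hgtop : Tendsto g atTop atTop)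
    (htg' : Tendsto (fun t => t * deriv g t) atTop atTop)
    (hq : 1 ≤ q)
    (hp : 1 < p)
    (hratio : Tendsto (fun t => (deriv g t) ^ 2 / (g t * deriv (deriv g) t)) atTop (𝓝 q))
    (hP : Tendsto (fun t => ENNReal.ofReal (t * deriv g t / g t)) atTop (𝓝 p)) :
    1 / p + ENNReal.ofReal (1 / q) = 1 := by
  have hq0 : (0:ℝ) < q := lt_of_lt_of_le one_pos hq
  -- differentiability facts
  have hD1 : ∀ t, t₀ < t → HasDerivAt g (deriv g t) t := by
    intro t ht
    have hc : ContDiffAt ℝ 2 g t := hg.contDiffAt (Ici_mem_nhds ht)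
    exact (hc.differentiableAt (by norm_num)).hasDerivAt
  have hD2 : ∀ t, t₀ < t → HasDerivAt (deriv g) (deriv (deriv g) t) t := by
    intro t ht
    have hc : ContDiffAt ℝ 2 g t := hg.contDiffAt (Ici_mem_nhds ht)
    have h1 : ContDiffAt ℝ 1 (fderiv ℝ g) t := hc.fderiv_right (by norm_num)
    have h2 : DifferentiableAt ℝ (fun x => fderiv ℝ g x 1) t :=
      (h1.differentiableAt one_ne_zero).clm_apply (differentiableAt_const _)
    have h3 : DifferentiableAt ℝ (deriv g) t := by
      have : deriv g = fun x => fderiv ℝ g x 1 := by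
        funext x; rw [fderiv_apply_one_eq_deriv]
      rw [this]; exact h2
    exact h3.hasDerivAt
  -- basic positivity, eventually
  have hev : ∀ᶠ t in atTop, t₀ < t ∧ 1 ≤ t ∧ 0 < g t := by
    filter_upwards [eventually_gt_atTop t₀, eventually_ge_atTop 1,
      hgtop.eventually_gt_atTop 0] with t h1 h2 h3
    exact ⟨h1, h2, h3⟩
  rcases eq_or_ne p ⊤ with hpt | hpt
  · -- CASE p = ∞ : show q = 1
    subst hpt
    have hftop : Tendsto (fun t => t * deriv g t / g t) atTop atTop := by
      rw [tendsto_atTop]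
      intro b
      have h2 : ∀ᶠ t in atTop,
          ENNReal.ofReal (max b 0) < ENNReal.ofReal (t * deriv g t / g t) :=
        hP.eventually (eventually_gt_nhds ENNReal.ofReal_lt_top)
      filter_upwards [h2] with t ht
      by_contra hb; push_neg at hb
      have : ENNReal.ofReal (t * deriv g t / g t) ≤ ENNReal.ofReal (max b 0) :=
        ENNReal.ofReal_le_ofReal (le_trans hb.le (le_max_left _ _))
      exact absurd this (not_le.mpr ht)
    have hqle : q ≤ 1 := by
      by_contra hq1; push_neg at hq1
      obtain ⟨s, hs1, hsq⟩ : ∃ s, 1 < s ∧ s < q :=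
        ⟨(1 + q) / 2, by linarith, by linarith⟩
      have hs0 : 0 < s := by linarith
      set r := 1 - 1/s with hr_def
      have hr0 : 0 < r := by
        rw [hr_def]
        have : 1/s < 1 := by rw [div_lt_one hs0]; linarith
        linarith
      set M := 2 * s / (s - 1) with hM_def
      have hM0 : 0 < M := div_pos (by linarith) (by linarith)
      have hMr : M * r = 2 := by
        rw [hM_def, hr_def]
        have h1 : s - 1 ≠ 0 := ne_of_gt (by linarith)
        field_simp
      have hev2 : ∀ᶠ t in atTop, s < (deriv g t)^2 / (g t * deriv (deriv g) t) :=
        hratio.eventually (eventually_gt_nhds hsq)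
      have hev3 : ∀ᶠ t in atTop, M ≤ t * deriv g t / g t :=
        hftop.eventually_ge_atTop M
      obtain ⟨T, hT⟩ := eventually_atTop.mp ((hev.and hev2).and hev3)
      obtain ⟨⟨⟨hTt₀, hT1, hTg⟩, -⟩, -⟩ := hT T le_rfl
      -- facts for all t ≥ T
      have hfacts : ∀ t ∈ Set.Ici T, t₀ < t ∧ 0 < t ∧ 0 < g t ∧ 0 < deriv g t ∧
          0 < deriv (deriv g) t ∧ s * (g t * deriv (deriv g) t) < (deriv g t)^2 ∧
          M ≤ t * deriv g t / g t := by
        intro t ht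
        obtain ⟨⟨⟨h1, h2, h3⟩, h4⟩, h5⟩ := hT t ht
        refine ⟨h1, by linarith, h3, hg' t h1.le, hg'' t h1.le, ?_, h5⟩
        exact (lt_div_iff₀ (mul_pos h3 (hg'' t h1.le))).mp h4
      set C := deriv g T / g T ^ (1/s) with hC_def
      have hC0 : 0 < C := div_pos (hg' T hTt₀.le) (Real.rpow_pos_of_pos hTg _)
      -- Step (a): g' t ≤ C * g t ^ (1/s)
      have stepA : ∀ t ∈ Set.Ici T, deriv g t ≤ C * g t ^ (1/s) := by
        have hmono : MonotoneOn
            (fun x => 1/s * Real.log (g x) - Real.log (deriv g x)) (Set.Ici T) := by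
          apply monoIci (f' := fun t => 1/s * (deriv g t / g t)
            - deriv (deriv g) t / deriv g t)
          · intro t ht
            obtain ⟨h1, h2, h3, h4, h5, h6, h7⟩ := hfacts t ht
            exact (((hD1 t h1).log h3.ne').const_mul (1/s)).sub
              ((hD2 t h1).log h4.ne')
          · intro t ht
            obtain ⟨h1, h2, h3, h4, h5, h6, h7⟩ := hfacts t ht
            have e1 : 1/s * (deriv g t / g t) - deriv (deriv g) t / deriv g t
                = (deriv g t ^ 2 - s * (g t * deriv (deriv g) t))
                  / (s * g t * deriv g t) := by
              field_simp
            rw [e1]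
            exact div_nonneg (by linarith) (by positivity)
        intro t ht
        have h := hmono Set.self_mem_Ici ht ht
        simp only at h
        obtain ⟨h1, h2, h3, h4, h5, h6, h7⟩ := hfacts t ht
        have hlog : Real.log (deriv g t) ≤ Real.log (C * g t ^ (1/s)) := by
          rw [hC_def, Real.log_mul (by positivity) (by positivity),
            Real.log_div (hg' T hTt₀.le).ne' (by positivity),
            Real.log_rpow hTg, Real.log_rpow h3]
          linarith
        calc deriv g t = Real.exp (Real.log (deriv g t)) := (Real.exp_log h4).symm
          _ ≤ Real.exp (Real.log (C * g t ^ (1/s))) := Real.exp_le_exp.mpr hlog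
          _ = C * g t ^ (1/s) := Real.exp_log (by positivity)
      -- Step (b): g t ^ r ≤ D * t
      set B := r * C with hB_def
      have hB0 : 0 < B := mul_pos hr0 hC0
      set D := B + g T ^ r with hD_def
      have hgTr : 0 < g T ^ r := Real.rpow_pos_of_pos hTg _
      have hD0 : 0 < D := by rw [hD_def]; linarith
      have stepB : ∀ t ∈ Set.Ici T, g t ^ r ≤ D * t := by
        have hmono : MonotoneOn (fun x => B * x - g x ^ r) (Set.Ici T) := by
          apply monoIci (f' := fun t => B - deriv g t * r * g t ^ (r - 1))
          · intro t ht
            obtain ⟨h1, h2, h3, h4, h5, h6, h7⟩ := hfacts t ht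
            have hd : HasDerivAt (fun x => B * x) B t := by
              simpa using (hasDerivAt_id t).const_mul B
            exact hd.sub ((hD1 t h1).rpow_const (Or.inl h3.ne'))
          · intro t ht
            obtain ⟨h1, h2, h3, h4, h5, h6, h7⟩ := hfacts t ht
            rw [sub_nonneg]
            have hgr : g t ^ (r - 1) = (g t ^ (1/s))⁻¹ := by
              rw [show r - 1 = -(1/s) by rw [hr_def]; ring, Real.rpow_neg h3.le]
            have h9 : (0:ℝ) < g t ^ (1/s) := Real.rpow_pos_of_pos h3 _
            rw [hgr, hB_def, mul_comm (deriv g t) r, mul_assoc]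
            apply mul_le_mul_of_nonneg_left _ hr0.le
            rw [← div_eq_mul_inv, div_le_iff₀ h9]
            exact stepA t ht
        intro t ht
        have h := hmono Set.self_mem_Ici ht ht
        simp only at h
        obtain ⟨h1, h2, h3, h4, h5, h6, h7⟩ := hfacts t ht
        have ht1 : (1:ℝ) ≤ t := le_trans hT1 ht
        have hBT : 0 ≤ B * T := mul_nonneg hB0.le (by linarith)
        calc g t ^ r ≤ B * t + g T ^ r := by linarith
          _ ≤ B * t + g T ^ r * t := by nlinarith
          _ = D * t := by rw [hD_def]; ring
      -- Step (c): c₀ * t ^ M ≤ g t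
      set c₀ := g T / T ^ M with hc₀_def
      have hT0 : (0:ℝ) < T := by linarith
      have hc₀0 : 0 < c₀ := div_pos hTg (Real.rpow_pos_of_pos hT0 _)
      have stepC : ∀ t ∈ Set.Ici T, c₀ * t ^ M ≤ g t := by
        have hmono : MonotoneOn (fun x => Real.log (g x) - M * Real.log x)
            (Set.Ici T) := by
          apply monoIci (f' := fun t => deriv g t / g t - M * t⁻¹)
          · intro t ht
            obtain ⟨h1, h2, h3, h4, h5, h6, h7⟩ := hfacts t ht
            exact ((hD1 t h1).log h3.ne').sub
              ((Real.hasDerivAt_log h2.ne').const_mul M)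
          · intro t ht
            obtain ⟨h1, h2, h3, h4, h5, h6, h7⟩ := hfacts t ht
            rw [sub_nonneg]
            have e : t * deriv g t / g t * t⁻¹ = deriv g t / g t := by
              field_simp
            have := mul_le_mul_of_nonneg_right h7 (inv_pos.mpr h2).le
            rw [e] at this
            linarith
        intro t ht
        have h := hmono Set.self_mem_Ici ht ht
        simp only at h
        obtain ⟨h1, h2, h3, h4, h5, h6, h7⟩ := hfacts t ht
        have hlog : Real.log (c₀ * t ^ M) ≤ Real.log (g t) := by
          rw [hc₀_def, Real.log_mul (by positivity) (by positivity),
            Real.log_div hTg.ne' (by positivity),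
            Real.log_rpow h2, Real.log_rpow hT0]
          linarith
        calc c₀ * t ^ M = Real.exp (Real.log (c₀ * t ^ M)) :=
            (Real.exp_log (by positivity)).symm
          _ ≤ Real.exp (Real.log (g t)) := Real.exp_le_exp.mpr hlog
          _ = g t := Real.exp_log h3
      -- contradiction
      have hcr : (0:ℝ) < c₀ ^ r := Real.rpow_pos_of_pos hc₀0 _
      set t₁ := max T ((D + 1) / c₀ ^ r) with ht₁_def
      have ht₁T : T ≤ t₁ := le_max_left _ _
      have ht₁mem : t₁ ∈ Set.Ici T := ht₁T
      obtain ⟨h1, h2, h3, h4, h5, h6, h7⟩ := hfacts t₁ ht₁mem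
      have hc1 := stepC t₁ ht₁mem
      have hb1 := stepB t₁ ht₁mem
      have hkey : c₀ ^ r * t₁ ^ (2:ℝ) ≤ D * t₁ := by
        have h8 : (c₀ * t₁ ^ M) ^ r ≤ g t₁ ^ r :=
          Real.rpow_le_rpow (by positivity) hc1 hr0.le
        have h9 : (c₀ * t₁ ^ M) ^ r = c₀ ^ r * t₁ ^ (2:ℝ) := by
          rw [Real.mul_rpow hc₀0.le (Real.rpow_pos_of_pos h2 M).le,
            ← Real.rpow_mul h2.le, hMr]
        rw [h9] at h8
        exact le_trans h8 hb1
      have ht2 : t₁ ^ (2:ℝ) = t₁ * t₁ := by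
        rw [show (2:ℝ) = ((2:ℕ):ℝ) by norm_num, Real.rpow_natCast]; ring
      rw [ht2] at hkey
      have hfin : c₀ ^ r * t₁ ≤ D := by
        calc c₀ ^ r * t₁ = c₀ ^ r * (t₁ * t₁) * t₁⁻¹ := by field_simp
          _ ≤ D * t₁ * t₁⁻¹ :=
              mul_le_mul_of_nonneg_right hkey (inv_pos.mpr h2).le
          _ = D := by field_simp
      have hge : D + 1 ≤ c₀ ^ r * t₁ := by
        have h10 : (D + 1) / c₀ ^ r ≤ t₁ := le_max_right _ _
        rw [div_le_iff₀ hcr] at h10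
        linarith
      linarith
    have hqeq : q = 1 := le_antisymm hqle hq
    rw [hqeq]
    norm_num
  · -- CASE p finite
    set P := p.toReal with hP_def
    have hP1 : 1 < P := by
      have := (ENNReal.toReal_lt_toReal (by simp : (1:ENNReal) ≠ ⊤) hpt).mpr hp
      simpa using this
    have hP0 : (0:ℝ) < P := by linarith
    have hPt : Tendsto (fun t => t * deriv g t / g t) atTop (𝓝 P) := by
      have h1 := (ENNReal.tendsto_toReal hpt).comp hP
      apply h1.congr'
      filter_upwards [hev] with t ht
      obtain ⟨ht0, ht1, htg⟩ := ht
      simp only [Function.comp]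
      exact ENNReal.toReal_ofReal
        (div_nonneg (mul_nonneg (by linarith) (hg' t ht0.le).le) htg.le)
    have hB : Tendsto (fun t => 1 + t * deriv (deriv g) t / deriv g t) atTop
        (𝓝 (1 + P / q)) := by
      apply Tendsto.const_add
      have h2 := hPt.div hratio hq0.ne'
      apply h2.congr'
      filter_upwards [hev] with t ht
      obtain ⟨ht0, ht1, htg⟩ := ht
      have h3 := (hg' t ht0.le).ne'
      have h4 := (hg'' t ht0.le).ne'
      have h5 := htg.ne'
      simp only [Pi.div_apply]
      field_simp
    set L := 1 + P / q with hL_def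
    have hPL : P = L := by
      have claim : ∀ ε : ℝ, 0 < ε → P ≤ L + ε ∧ L - ε ≤ P := by
        intro ε hε
        have h1 : ∀ᶠ t in atTop,
            (L - ε < 1 + t * deriv (deriv g) t / deriv g t) ∧
            (1 + t * deriv (deriv g) t / deriv g t < L + ε) :=
          (hB.eventually_const_lt (by linarith)).and
            (hB.eventually_lt_const (by linarith))
        obtain ⟨T, hT⟩ := eventually_atTop.mp (hev.and h1)
        have hfacts : ∀ t ∈ Set.Ici T, t₀ < t ∧ 0 < t ∧ 0 < g t ∧ 0 < deriv g t ∧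
            (L - ε) * deriv g t ≤ deriv g t + t * deriv (deriv g) t ∧
            deriv g t + t * deriv (deriv g) t ≤ (L + ε) * deriv g t := by
          intro t ht
          obtain ⟨⟨ht0, ht1, htg⟩, hlo, hhi⟩ := hT t ht
          have h3 := hg' t ht0.le
          have e : (1 + t * deriv (deriv g) t / deriv g t) * deriv g t
              = deriv g t + t * deriv (deriv g) t := by
            field_simp
          refine ⟨ht0, by linarith, htg, h3, ?_, ?_⟩
          · rw [← e]; exact mul_le_mul_of_nonneg_right hlo.le h3.le
          · rw [← e]; exact mul_le_mul_of_nonneg_right hhi.le h3.le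
        constructor
        · -- upper bound
          have hmono1 : MonotoneOn (fun x => (L + ε) * g x - x * deriv g x)
              (Set.Ici T) := by
            apply monoIci (f' := fun t => (L + ε) * deriv g t
              - (1 * deriv g t + t * deriv (deriv g) t))
            · intro t ht
              obtain ⟨h1, h2, h3, h4, h5, h6⟩ := hfacts t ht
              exact ((hD1 t h1).const_mul (L + ε)).sub
                ((hasDerivAt_id t).mul (hD2 t h1))
            · intro t ht
              obtain ⟨h1, h2, h3, h4, h5, h6⟩ := hfacts t ht
              simp only [one_mul]
              linarith
          set c := (L + ε) * g T - T * deriv g T with hc_def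
          have hbound : ∀ᶠ t in atTop, t * deriv g t / g t ≤ (L + ε) - c / g t := by
            rw [eventually_atTop]
            refine ⟨T, fun t ht => ?_⟩
            obtain ⟨h1, h2, h3, h4, h5, h6⟩ := hfacts t ht
            have h := hmono1 Set.self_mem_Ici ht ht
            simp only at h
            rw [div_le_iff₀ h3]
            have e : ((L + ε) - c / g t) * g t = (L + ε) * g t - c := by
              field_simp
            rw [e]
            linarith
          have hlim : Tendsto (fun t => (L + ε) - c / g t) atTop (𝓝 (L + ε)) := by
            have h0 : Tendsto (fun t => c / g t) atTop (𝓝 0) := by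
              simpa [div_eq_mul_inv] using hgtop.inv_tendsto_atTop.const_mul c
            simpa using tendsto_const_nhds.sub h0
          exact le_of_tendsto_of_tendsto hPt hlim hbound
        · -- lower bound
          have hmono2 : MonotoneOn (fun x => x * deriv g x - (L - ε) * g x)
              (Set.Ici T) := by
            apply monoIci (f' := fun t => (1 * deriv g t + t * deriv (deriv g) t)
              - (L - ε) * deriv g t)
            · intro t ht
              obtain ⟨h1, h2, h3, h4, h5, h6⟩ := hfacts t ht
              exact ((hasDerivAt_id t).mul (hD2 t h1)).sub
                ((hD1 t h1).const_mul (L - ε))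
            · intro t ht
              obtain ⟨h1, h2, h3, h4, h5, h6⟩ := hfacts t ht
              simp only [one_mul]
              linarith
          set c := T * deriv g T - (L - ε) * g T with hc_def
          have hbound : ∀ᶠ t in atTop, (L - ε) + c / g t ≤ t * deriv g t / g t := by
            rw [eventually_atTop]
            refine ⟨T, fun t ht => ?_⟩
            obtain ⟨h1, h2, h3, h4, h5, h6⟩ := hfacts t ht
            have h := hmono2 Set.self_mem_Ici ht ht
            simp only at h
            rw [le_div_iff₀ h3]
            have e : ((L - ε) + c / g t) * g t = (L - ε) * g t + c := by
              field_simp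
            rw [e]
            linarith
          have hlim : Tendsto (fun t => (L - ε) + c / g t) atTop (𝓝 (L - ε)) := by
            have h0 : Tendsto (fun t => c / g t) atTop (𝓝 0) := by
              simpa [div_eq_mul_inv] using hgtop.inv_tendsto_atTop.const_mul c
            simpa using tendsto_const_nhds.add h0
          exact le_of_tendsto_of_tendsto hlim hPt hbound
      clear_value L P
      by_contra hne
      have habs : 0 < |P - L| := abs_pos.mpr (sub_ne_zero.mpr hne)
      obtain ⟨h1, h2⟩ := claim (|P - L| / 2) (by linarith)
      rcases abs_cases (P - L) with ⟨heq, _⟩ | ⟨heq, _⟩ <;>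
        rw [heq] at h1 h2 habs <;> linarith
    have key : 1/P + 1/q = 1 := by
      rw [hL_def] at hPL
      have hq' := hq0.ne'
      have hP' := hP0.ne'
      field_simp at hPL ⊢
      linarith
    have hpe : p = ENNReal.ofReal P := by
      rw [hP_def]; exact (ENNReal.ofReal_toReal hpt).symm
    have h1 : 1 / ENNReal.ofReal P = ENNReal.ofReal (1 / P) := by
      rw [one_div, one_div, ENNReal.ofReal_inv_of_pos hP0]
    rw [hpe, h1, ← ENNReal.ofReal_add (one_div_nonneg.mpr hP0.le)
      (one_div_nonneg.mpr hq0.le), key, ENNReal.ofReal_one]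
end

section
/- Let ĝ ∈ C²([t₀,∞)) with ĝ, ĝ' > 0, ĝ(t) → ∞ as t → ∞, and ĝ'(t)/ĝ(t) nonincreasing. Define ĝ₀ = ĝ and ĝ_{i+1}(t) = exp(ĝ_i(t)). Then for every i ≥ 0, limsup_{t→∞} ĝ_i(t)·ĝ_i''(t)/ĝ_i'(t)² ≤ 1. -/
open Filter Topology

lemma antitoneOn_deriv_nonpos' {f : ℝ → ℝ} {s : Set ℝ} {t : ℝ}
    (hf : AntitoneOn f s) (hs : s ∈ 𝓝 t) (ht : t ∈ s)
    (hd : DifferentiableAt ℝ f t) : deriv f t ≤ 0 := by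
  have h := hd.hasDerivAt
  rw [hasDerivAt_iff_tendsto_slope] at h
  have h2 : Tendsto (slope f t) (𝓝[>] t) (𝓝 (deriv f t)) :=
    h.mono_left (nhdsWithin_mono t (fun x hx => ne_of_gt hx))
  refine le_of_tendsto h2 ?_
  have hs' : s ∈ 𝓝[>] t := nhdsWithin_le_nhds hs
  filter_upwards [hs', self_mem_nhdsWithin] with x hxs hxt
  rw [slope_def_field]
  have hfx : f x ≤ f t := hf ht hxs (le_of_lt hxt)
  have hxt' : (0:ℝ) < x - t := sub_pos.mpr hxt
  exact div_nonpos_of_nonpos_of_nonneg (by linarith) (le_of_lt hxt')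

/-- If `ĝ` is C², positive with positive derivative, tends to `∞`, and `ĝ'/ĝ` is
nonincreasing, then each iterated exponential `ĝ_i`, defined by `ĝ₀ = ĝ` and
`ĝ_{i+1} = exp ∘ ĝ_i`, satisfies `limsup_{t→∞} ĝ_i ĝ_i''/(ĝ_i')² ≤ 1`
(expressed as: for all `ε > 0`, eventually `ĝ_i ĝ_i''/(ĝ_i')² ≤ 1 + ε`). -/
theorem stmt4 (t₀ : ℝ) (ghat : ℝ → ℝ)
    (hg : ContDiffOn ℝ 2 ghat (Set.Ici t₀))
    (hgpos : ∀ t ≥ t₀, 0 < ghat t)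
    (hg' : ∀ t ≥ t₀, 0 < deriv ghat t)
    (hgtop : Tendsto ghat atTop atTop)
    (hmono : AntitoneOn (fun t => deriv ghat t / ghat t) (Set.Ici t₀))
    (G : ℕ → ℝ → ℝ)
    (hG0 : G 0 = ghat)
    (hGs : ∀ i, G (i + 1) = fun t => Real.exp (G i t)) :
    ∀ i : ℕ, ∀ ε > (0:ℝ), ∀ᶠ t in atTop,
      G i t * deriv (deriv (G i)) t / (deriv (G i) t) ^ 2 ≤ 1 + ε := by
  have hopen : IsOpen (Set.Ioi t₀) := isOpen_Ioi
  suffices H : ∀ i, ContDiffOn ℝ 2 (G i) (Set.Ioi t₀) ∧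
      (∀ t ∈ Set.Ioi t₀, 0 < deriv (G i) t) ∧
      Tendsto (G i) atTop atTop ∧
      (∀ ε > (0:ℝ), ∀ᶠ t in atTop,
        G i t * deriv (deriv (G i)) t / (deriv (G i) t) ^ 2 ≤ 1 + ε) by
    exact fun i => (H i).2.2.2
  intro i
  induction i with
  | zero =>
    rw [hG0]
    have hC : ContDiffOn ℝ 2 ghat (Set.Ioi t₀) := hg.mono Set.Ioi_subset_Ici_self
    have hC1 : ContDiffOn ℝ 1 (deriv ghat) (Set.Ioi t₀) :=
      hC.deriv_of_isOpen hopen (by norm_num)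
    refine ⟨hC, fun t ht => hg' t (le_of_lt ht), hgtop, ?_⟩
    intro ε hε
    filter_upwards [eventually_gt_atTop t₀] with t ht
    have hd1 : DifferentiableAt ℝ ghat t :=
      ((hC.differentiableOn (by norm_num)).differentiableAt (hopen.mem_nhds ht))
    have hd2 : DifferentiableAt ℝ (deriv ghat) t :=
      ((hC1.differentiableOn one_ne_zero).differentiableAt (hopen.mem_nhds ht))
    have hgt : (0:ℝ) < ghat t := hgpos t (le_of_lt ht)
    have hg't : (0:ℝ) < deriv ghat t := hg' t (le_of_lt ht)
    have hq : DifferentiableAt ℝ (fun s => deriv ghat s / ghat s) t :=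
      hd2.div hd1 (ne_of_gt hgt)
    have hle : deriv (fun s => deriv ghat s / ghat s) t ≤ 0 :=
      antitoneOn_deriv_nonpos' hmono (Ici_mem_nhds ht) (le_of_lt ht) hq
    rw [deriv_fun_div hd2 hd1 (ne_of_gt hgt)] at hle
    have hsq : (0:ℝ) < ghat t ^ 2 := by positivity
    have hnum : deriv (deriv ghat) t * ghat t - deriv ghat t * deriv ghat t ≤ 0 := by
      by_contra hcon
      push_neg at hcon
      have : (0:ℝ) < (deriv (deriv ghat) t * ghat t - deriv ghat t * deriv ghat t) / ghat t ^ 2 :=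
        div_pos hcon hsq
      linarith
    have hsq' : (0:ℝ) < deriv ghat t ^ 2 := by positivity
    rw [div_le_iff₀ hsq']
    nlinarith
  | succ i ih =>
    obtain ⟨hC, hd, htop, hR⟩ := ih
    have hCt : ∀ t ∈ Set.Ioi t₀, ContDiffAt ℝ 2 (G i) t :=
      fun t ht => hC.contDiffAt (hopen.mem_nhds ht)
    have hdgi : ∀ t ∈ Set.Ioi t₀, HasDerivAt (G i) (deriv (G i) t) t := fun t ht =>
      (((hC.differentiableOn (by norm_num)).differentiableAt (hopen.mem_nhds ht))).hasDerivAt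
    have hderiv : ∀ t ∈ Set.Ioi t₀, HasDerivAt (G (i+1)) (Real.exp (G i t) * deriv (G i) t) t := by
      intro t ht
      rw [hGs]
      exact (hdgi t ht).exp
    have hC' : ContDiffOn ℝ 2 (G (i+1)) (Set.Ioi t₀) := by
      rw [hGs]
      exact Real.contDiff_exp.comp_contDiffOn hC
    have hC1 : ContDiffOn ℝ 1 (deriv (G i)) (Set.Ioi t₀) :=
      hC.deriv_of_isOpen hopen (by norm_num)
    have hd' : ∀ t ∈ Set.Ioi t₀, 0 < deriv (G (i+1)) t := by
      intro t ht
      rw [(hderiv t ht).deriv]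
      exact mul_pos (Real.exp_pos _) (hd t ht)
    have htop' : Tendsto (G (i+1)) atTop atTop := by
      rw [hGs]
      exact Real.tendsto_exp_atTop.comp htop
    refine ⟨hC', hd', htop', ?_⟩
    intro ε hε
    have h2 := hR 1 one_pos
    have hbig : ∀ᶠ t in atTop, max (2/ε) 1 ≤ G i t := htop.eventually_ge_atTop _
    filter_upwards [h2, hbig, eventually_gt_atTop t₀] with t hR2 hGbig ht
    have hta : t ∈ Set.Ioi t₀ := ht
    set a := G i t with ha
    set b := deriv (G i) t with hb
    have hapos : (0:ℝ) < a := lt_of_lt_of_le one_pos (le_trans (le_max_right _ _) hGbig)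
    have hbpos : (0:ℝ) < b := hd t hta
    have hdd : DifferentiableAt ℝ (deriv (G i)) t :=
      (hC1.differentiableOn one_ne_zero).differentiableAt (hopen.mem_nhds hta)
    set c := deriv (deriv (G i)) t with hc
    -- first derivative value
    have e1 : deriv (G (i+1)) t = Real.exp a * b := (hderiv t hta).deriv
    -- second derivative
    have heq : deriv (G (i+1)) =ᶠ[𝓝 t] fun s => Real.exp (G i s) * deriv (G i) s := by
      filter_upwards [hopen.mem_nhds hta] with s hs using (hderiv s hs).deriv
    have hmul : HasDerivAt (fun s => Real.exp (G i s) * deriv (G i) s)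
        (Real.exp a * b * b + Real.exp a * c) t := by
      exact ((hdgi t hta).exp).mul hdd.hasDerivAt
    have e2 : deriv (deriv (G (i+1))) t = Real.exp a * b * b + Real.exp a * c := by
      rw [heq.deriv_eq]
      exact hmul.deriv
    have eG : G (i+1) t = Real.exp a := by rw [hGs]
    rw [eG, e1, e2]
    have hE : (0:ℝ) < Real.exp a := Real.exp_pos a
    have key : Real.exp a * (Real.exp a * b * b + Real.exp a * c) / (Real.exp a * b) ^ 2
        = 1 + c / b ^ 2 := by
      field_simp
    rw [key]
    -- from hR2 : a * c / b ^ 2 ≤ 1 + 1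
    have hcb : c / b ^ 2 ≤ ε := by
      have hb2 : (0:ℝ) < b ^ 2 := by positivity
      have h1 : c / b ^ 2 = (a * c / b ^ 2) / a := by
        field_simp
      rw [h1]
      have h3 : (a * c / b ^ 2) / a ≤ 2 / a := by
        gcongr
        linarith
      refine le_trans h3 ?_
      rw [div_le_iff₀ hapos]
      have h4 : 2 / ε ≤ a := le_trans (le_max_left _ _) hGbig
      calc (2:ℝ) = ε * (2 / ε) := by field_simp
        _ ≤ ε * a := by
            apply mul_le_mul_of_nonneg_left h4 (le_of_lt hε)
    linarith
end

section
/- If g ∈ C²([t₀,∞)) with g', g'' > 0 and g'(t)²/(g(t)g''(t)) → q ∈ [1,∞) as t → ∞, then for every ε > 0 there exists t_ε ≥ t₀ such that for all t > s ≥ t_ε: (g(t)/g(s))^{1/(q+ε)} ≤ g'(t)/g'(s) ≤ (g(t)/g(s))^{1/(q−ε)}. -/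
open Filter Topology

private lemma mono_aux {a : ℝ} {u v : ℝ → ℝ}
    (hu : ∀ x ∈ Set.Ici a, HasDerivAt u (v x) x)
    (hv : ∀ x ∈ Set.Ici a, 0 < v x) : StrictMonoOn u (Set.Ici a) := by
  apply strictMonoOn_of_deriv_pos (convex_Ici a)
  · exact fun x hx => (hu x hx).continuousAt.continuousWithinAt
  · intro x hx
    rw [interior_Ici] at hx
    rw [(hu x (Set.mem_Ici.mpr (le_of_lt (Set.mem_Ioi.mp hx)))).deriv]
    exact hv x (Set.mem_Ici.mpr (le_of_lt (Set.mem_Ioi.mp hx)))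

/-- If `g', g'' > 0` and `g'²/(g g'') → q ≥ 1`, then for each `ε > 0` (small enough
that `q − ε > 0`) there is `t_ε ≥ t₀` with
`(g t/g s)^(1/(q+ε)) ≤ g' t/g' s ≤ (g t/g s)^(1/(q−ε))` whenever `t > s ≥ t_ε`. -/
theorem stmt6 (t₀ q : ℝ) (g : ℝ → ℝ)
    (hg : ContDiffOn ℝ 2 g (Set.Ici t₀))
    (hgpos : ∀ t ≥ t₀, 0 < g t)
    (hg' : ∀ t ≥ t₀, 0 < deriv g t)
    (hg'' : ∀ t ≥ t₀, 0 < deriv (deriv g) t)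
    (hq : 1 ≤ q)
    (hratio : Tendsto (fun t => (deriv g t) ^ 2 / (g t * deriv (deriv g) t)) atTop (𝓝 q)) :
    ∀ ε : ℝ, 0 < ε → ε < q → ∃ tε ≥ t₀, ∀ s t : ℝ, tε ≤ s → s < t →
      (g t / g s) ^ ((1:ℝ) / (q + ε)) ≤ deriv g t / deriv g s ∧
      deriv g t / deriv g s ≤ (g t / g s) ^ ((1:ℝ) / (q - ε)) := by
  intro ε hε hεq
  -- eventually the ratio is in (q-ε, q+ε)
  have hev : ∀ᶠ x in atTop,
      (deriv g x) ^ 2 / (g x * deriv (deriv g) x) ∈ Set.Ioo (q - ε) (q + ε) :=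
    hratio (Ioo_mem_nhds (by linarith) (by linarith))
  obtain ⟨T, hT⟩ := eventually_atTop.mp hev
  set tε := max T (t₀ + 1) with htε
  refine ⟨tε, le_trans (by linarith) (le_max_right _ _), ?_⟩
  intro s t hs hst
  -- basic facts about points in [tε, ∞)
  have hIci : ∀ x ∈ Set.Ici tε, t₀ < x := fun x hx =>
    lt_of_lt_of_le (by linarith) (le_trans (le_max_right _ _) hx)
  -- derivatives exist
  have hgI : ContDiffOn ℝ 2 g (Set.Ioi t₀) := hg.mono Set.Ioi_subset_Ici_self
  have hdg : ∀ x ∈ Set.Ici tε, HasDerivAt g (deriv g x) x := by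
    intro x hx
    have hcd : ContDiffAt ℝ 2 g x := hgI.contDiffAt (Ioi_mem_nhds (hIci x hx))
    exact (hcd.differentiableAt (by norm_num)).hasDerivAt
  have hdg' : ∀ x ∈ Set.Ici tε, HasDerivAt (deriv g) (deriv (deriv g) x) x := by
    intro x hx
    have hcd : ContDiffOn ℝ 1 (deriv g) (Set.Ioi t₀) :=
      hgI.deriv_of_isOpen isOpen_Ioi (by norm_num)
    have := hcd.contDiffAt (Ioi_mem_nhds (hIci x hx))
    exact (this.differentiableAt (by norm_num)).hasDerivAt
  -- pointwise bounds
  have hx0 : ∀ x ∈ Set.Ici tε, t₀ ≤ x := fun x hx => (hIci x hx).le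
  have hbound : ∀ x ∈ Set.Ici tε,
      (q - ε) * (g x * deriv (deriv g) x) < (deriv g x) ^ 2 ∧
      (deriv g x) ^ 2 < (q + ε) * (g x * deriv (deriv g) x) := by
    intro x hx
    have hxT : T ≤ x := le_trans (le_max_left _ _) hx
    have hmem := hT x hxT
    have hpos : 0 < g x * deriv (deriv g) x :=
      mul_pos (hgpos x (hx0 x hx)) (hg'' x (hx0 x hx))
    constructor
    · have := hmem.1
      rw [lt_div_iff₀ hpos] at this; linarith
    · have := hmem.2
      rw [div_lt_iff₀ hpos] at this; linarith
  -- two auxiliary monotone functions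
  have key : ∀ k : ℝ, 0 < k →
      (∀ x ∈ Set.Ici tε,
        0 < deriv (deriv g) x / deriv g x - (1/k) * (deriv g x / g x)) →
      Real.log (deriv g s) - (1/k) * Real.log (g s) <
      Real.log (deriv g t) - (1/k) * Real.log (g t) := by
    intro k hk hpos
    have hF : ∀ x ∈ Set.Ici tε,
        HasDerivAt (fun y => Real.log (deriv g y) - (1/k) * Real.log (g y))
          (deriv (deriv g) x / deriv g x - (1/k) * (deriv g x / g x)) x := by
      intro x hx
      exact ((hdg' x hx).log (hg' x (hx0 x hx)).ne').sub
        (((hdg x hx).log (hgpos x (hx0 x hx)).ne').const_mul (1/k))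
    exact mono_aux hF hpos hs (le_trans hs hst.le) hst
  have hgs := hgpos s (hx0 s hs)
  have hgt := hgpos t (le_trans (hx0 s hs) hst.le)
  have hg's := hg' s (hx0 s hs)
  have hg't := hg' t (le_trans (hx0 s hs) hst.le)
  have deriv_pos : ∀ k : ℝ, 0 < k →
      (∀ x ∈ Set.Ici tε, (deriv g x) ^ 2 < k * (g x * deriv (deriv g) x)) →
      ∀ x ∈ Set.Ici tε,
        0 < deriv (deriv g) x / deriv g x - (1/k) * (deriv g x / g x) := by
    intro k hk hlt x hx
    have h1 := hg' x (hx0 x hx)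
    have h2 := hgpos x (hx0 x hx)
    have h3 := hg'' x (hx0 x hx)
    have h4 := hlt x hx
    rw [sub_pos, div_mul_div_comm, one_mul, div_lt_div_iff₀ (by positivity) h1]
    nlinarith
  constructor
  · -- lower bound: use k = q + ε
    have hk : (0:ℝ) < q + ε := by linarith
    have h := key (q + ε) hk (deriv_pos (q + ε) hk (fun x hx => (hbound x hx).2))
    rw [← Real.exp_log (div_pos hg't hg's), Real.rpow_def_of_pos (div_pos hgt hgs)]
    apply Real.exp_le_exp.mpr
    rw [Real.log_div hgt.ne' hgs.ne', Real.log_div hg't.ne' hg's.ne']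
    ring_nf
    ring_nf at h
    linarith
  · -- upper bound: use k = q - ε
    have hk : (0:ℝ) < q - ε := by linarith
    have hlt : ∀ x ∈ Set.Ici tε,
        0 < (1/(q-ε)) * (deriv g x / g x) - deriv (deriv g) x / deriv g x := by
      intro x hx
      have h1 := hg' x (hx0 x hx)
      have h2 := hgpos x (hx0 x hx)
      have h3 := hg'' x (hx0 x hx)
      have h4 := (hbound x hx).1
      rw [sub_pos, div_mul_div_comm, one_mul, div_lt_div_iff₀ h1 (by positivity)]
      nlinarith
    -- monotone function G = (1/(q-ε)) log g - log g'
    have hG : ∀ x ∈ Set.Ici tε,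
        HasDerivAt (fun y => (1/(q-ε)) * Real.log (g y) - Real.log (deriv g y))
          ((1/(q-ε)) * (deriv g x / g x) - deriv (deriv g) x / deriv g x) x := by
      intro x hx
      exact (((hdg x hx).log (hgpos x (hx0 x hx)).ne').const_mul (1/(q-ε))).sub
        ((hdg' x hx).log (hg' x (hx0 x hx)).ne')
    have h := mono_aux hG hlt hs (le_trans hs hst.le) hst
    rw [← Real.exp_log (div_pos hg't hg's), Real.rpow_def_of_pos (div_pos hgt hgs)]
    apply Real.exp_le_exp.mpr
    rw [Real.log_div hgt.ne' hgs.ne', Real.log_div hg't.ne' hg's.ne']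
    ring_nf
    ring_nf at h
    linarith
end

section
/- Suppose g ∈ C²([t₀,∞)) with g', g'' > 0 and t·g'(t)/g(t) → p ∈ (1,∞) as t → ∞. If (s_n), (t_n) are sequences with s_n < t_n, s_n → ∞, and s_n/t_n → x ∈ [0,1], then g(s_n)/g(t_n) → x^p. -/
open Filter Topology

/-- If `t·g'(t)/g(t) → p ∈ (1,∞)` and `s_n < t_n`, `s_n → ∞`, `s_n/t_n → x ∈ [0,1]`,
then `g(s_n)/g(t_n) → x^p`. -/
theorem stmt7 (t₀ p x : ℝ) (g : ℝ → ℝ) (s t : ℕ → ℝ)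
    (hg : ContDiffOn ℝ 2 g (Set.Ici t₀))
    (hg' : ∀ u ≥ t₀, 0 < deriv g u)
    (hg'' : ∀ u ≥ t₀, 0 < deriv (deriv g) u)
    (hgtop : Tendsto g atTop atTop)
    (hp : 1 < p)
    (hP : Tendsto (fun u => u * deriv g u / g u) atTop (𝓝 p))
    (hst : ∀ n, s n < t n)
    (hs : Tendsto s atTop atTop)
    (hx0 : 0 ≤ x) (hx1 : x ≤ 1)
    (hrat : Tendsto (fun n => s n / t n) atTop (𝓝 x)) :
    Tendsto (fun n => g (s n) / g (t n)) atTop (𝓝 (x ^ p)) := by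
  have ht : Tendsto t atTop atTop := tendsto_atTop_mono (fun n => (hst n).le) hs
  -- Key estimate: for every ε > 0, eventually the log-difference is controlled.
  have key : ∀ ε : ℝ, 0 < ε → ∃ T : ℝ, t₀ < T ∧ 0 < T ∧ (∀ u, T ≤ u → 0 < g u) ∧
      ∀ a b, T ≤ a → a ≤ b →
        (p - ε) * (Real.log b - Real.log a) ≤ Real.log (g b) - Real.log (g a) ∧
        Real.log (g b) - Real.log (g a) ≤ (p + ε) * (Real.log b - Real.log a) := by
    intro ε hε
    have h1 : ∀ᶠ u in atTop, |u * deriv g u / g u - p| < ε := by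
      have := Metric.tendsto_nhds.1 hP ε hε
      simpa [Real.dist_eq] using this
    have h2 : ∀ᶠ u in atTop, 0 < g u := hgtop.eventually (eventually_gt_atTop 0)
    obtain ⟨T₁, hT₁⟩ := eventually_atTop.1 (h1.and h2)
    set T : ℝ := max T₁ (max t₀ 0) + 1 with hTdef
    have hTprop : ∀ u, T ≤ u → |u * deriv g u / g u - p| < ε ∧ 0 < g u ∧ t₀ < u ∧ 0 < u := by
      intro u hu
      have h₁ : T₁ ≤ u := le_trans (by simp [hTdef]; nlinarith [le_max_left T₁ (max t₀ 0)]) hu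
      have h₂ : t₀ < u := lt_of_lt_of_le (by
        have := le_max_right T₁ (max t₀ 0); have := le_max_left t₀ (0:ℝ); simp [hTdef]; linarith) hu
      have h₃ : (0:ℝ) < u := lt_of_lt_of_le (by
        have := le_max_right T₁ (max t₀ 0); have := le_max_right t₀ (0:ℝ); simp [hTdef]; linarith) hu
      exact ⟨(hT₁ u h₁).1, (hT₁ u h₁).2, h₂, h₃⟩
    have hTt₀ : t₀ < T := by
      have := le_max_right T₁ (max t₀ 0); have := le_max_left t₀ (0:ℝ); simp [hTdef]; linarith
    have hT0 : (0:ℝ) < T := by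
      have := le_max_right T₁ (max t₀ 0); have := le_max_right t₀ (0:ℝ); simp [hTdef]; linarith
    have hsub : Set.Ici T ⊆ Set.Ici t₀ := Set.Ici_subset_Ici.2 hTt₀.le
    -- derivative facts at interior points
    have hderiv : ∀ u ∈ Set.Ioi T,
        HasDerivAt (fun v => Real.log (g v)) (deriv g u / g u) u := by
      intro u hu
      have hu' := hTprop u (le_of_lt hu)
      have hdg : DifferentiableAt ℝ g u :=
        (hg.contDiffAt (Ici_mem_nhds (lt_trans hTt₀ hu))).differentiableAt (by norm_num)
      exact hdg.hasDerivAt.log (ne_of_gt hu'.2.1)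
    have hcont : ContinuousOn (fun v => Real.log (g v)) (Set.Ici T) := by
      apply ContinuousOn.log ((hg.continuousOn).mono hsub)
      intro u hu; exact ne_of_gt (hTprop u hu).2.1
    have hcontlog : ContinuousOn Real.log (Set.Ici T) :=
      Real.continuousOn_log.mono (fun u hu => ne_of_gt (lt_of_lt_of_le hT0 hu))
    refine ⟨T, hTt₀, hT0, fun u hu => (hTprop u hu).2.1, ?_⟩
    -- lower bound: φ = log ∘ g - (p-ε) log monotone on Ici T
    have hmono₁ : MonotoneOn (fun v => Real.log (g v) - (p - ε) * Real.log v) (Set.Ici T) := by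
      apply monotoneOn_of_deriv_nonneg (convex_Ici T)
      · exact hcont.sub (continuousOn_const.mul hcontlog)
      · intro u hu
        rw [interior_Ici] at hu
        have hu' := hTprop u (le_of_lt hu)
        exact (((hderiv u hu).sub ((Real.hasDerivAt_log (ne_of_gt hu'.2.2.2)).const_mul
          (p - ε))).differentiableAt).differentiableWithinAt
      · intro u hu
        rw [interior_Ici] at hu
        have hu' := hTprop u (le_of_lt hu)
        have hd := (hderiv u hu).sub ((Real.hasDerivAt_log (ne_of_gt hu'.2.2.2)).const_mul (p - ε))
        rw [show deriv (fun v => Real.log (g v) - (p - ε) * Real.log v) u = _ from hd.deriv]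
        have hb := abs_lt.1 hu'.1
        have h0u : (0:ℝ) < u := hu'.2.2.2
        have hgu : (0:ℝ) < g u := hu'.2.1
        have hkey : p - ε < u * (deriv g u / g u) := by
          rw [← mul_div_assoc]; linarith [hb.1]
        have : (p - ε) * u⁻¹ ≤ deriv g u / g u := by
          have h2 := mul_le_mul_of_nonneg_right hkey.le (inv_nonneg.2 h0u.le)
          calc (p - ε) * u⁻¹ ≤ u * (deriv g u / g u) * u⁻¹ := h2
          _ = deriv g u / g u := by field_simp
        linarith
    have hmono₂ : MonotoneOn (fun v => (p + ε) * Real.log v - Real.log (g v)) (Set.Ici T) := by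
      apply monotoneOn_of_deriv_nonneg (convex_Ici T)
      · exact (continuousOn_const.mul hcontlog).sub hcont
      · intro u hu
        rw [interior_Ici] at hu
        have hu' := hTprop u (le_of_lt hu)
        exact ((((Real.hasDerivAt_log (ne_of_gt hu'.2.2.2)).const_mul (p + ε)).sub
          (hderiv u hu)).differentiableAt).differentiableWithinAt
      · intro u hu
        rw [interior_Ici] at hu
        have hu' := hTprop u (le_of_lt hu)
        have hd := ((Real.hasDerivAt_log (ne_of_gt hu'.2.2.2)).const_mul (p + ε)).sub (hderiv u hu)
        rw [show deriv (fun v => (p + ε) * Real.log v - Real.log (g v)) u = _ from hd.deriv]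
        have hb := abs_lt.1 hu'.1
        have h0u : (0:ℝ) < u := hu'.2.2.2
        have hgu : (0:ℝ) < g u := hu'.2.1
        have hkey : u * (deriv g u / g u) < p + ε := by
          rw [← mul_div_assoc]; linarith [hb.2]
        have : deriv g u / g u ≤ (p + ε) * u⁻¹ := by
          have h2 := mul_le_mul_of_nonneg_right hkey.le (inv_nonneg.2 h0u.le)
          calc deriv g u / g u = u * (deriv g u / g u) * u⁻¹ := by field_simp
          _ ≤ (p + ε) * u⁻¹ := h2
        linarith
    intro a b ha hab
    have hb : b ∈ Set.Ici T := le_trans ha hab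
    have h₁ := hmono₁ (Set.mem_Ici.2 ha) hb hab
    have h₂ := hmono₂ (Set.mem_Ici.2 ha) hb hab
    simp only at h₁ h₂
    constructor <;> nlinarith [h₁, h₂]
  -- Notation
  set D : ℕ → ℝ := fun n => Real.log (s n) - Real.log (t n) with hD
  set L : ℕ → ℝ := fun n => Real.log (g (s n)) - Real.log (g (t n)) with hL
  have hbnd : ∀ ε : ℝ, 0 < ε → ∀ᶠ n in atTop,
      (p + ε) * D n ≤ L n ∧ L n ≤ (p - ε) * D n := by
    intro ε hε
    obtain ⟨T, _, _, _, hmono⟩ := key ε hε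
    filter_upwards [hs.eventually (eventually_ge_atTop T)] with n hn
    have h := hmono (s n) (t n) hn (hst n).le
    have e1 : (p + ε) * (Real.log (s n) - Real.log (t n)) =
        -((p + ε) * (Real.log (t n) - Real.log (s n))) := by ring
    have e2 : (p - ε) * (Real.log (s n) - Real.log (t n)) =
        -((p - ε) * (Real.log (t n) - Real.log (s n))) := by ring
    constructor
    · show (p + ε) * (Real.log (s n) - Real.log (t n)) ≤
        Real.log (g (s n)) - Real.log (g (t n))
      rw [e1]; linarith [h.2]
    · show Real.log (g (s n)) - Real.log (g (t n)) ≤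
        (p - ε) * (Real.log (s n) - Real.log (t n))
      rw [e2]; linarith [h.1]
  have h2 : ∀ᶠ u in atTop, 0 < g u := hgtop.eventually (eventually_gt_atTop 0)
  have hposn : ∀ᶠ n in atTop, 0 < s n ∧ 0 < t n ∧ 0 < g (s n) ∧ 0 < g (t n) := by
    filter_upwards [hs.eventually (eventually_gt_atTop 0), ht.eventually (eventually_gt_atTop 0),
      hs.eventually h2, ht.eventually h2] with n h1 h2 h3 h4
    exact ⟨h1, h2, h3, h4⟩
  have hratio_eq : (fun n => Real.exp (L n)) =ᶠ[atTop] (fun n => g (s n) / g (t n)) := by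
    filter_upwards [hposn] with n hn
    simp only [hL]
    rw [Real.exp_sub, Real.exp_log hn.2.2.1, Real.exp_log hn.2.2.2]
  have hDlog : (fun n => Real.log (s n / t n)) =ᶠ[atTop] D := by
    filter_upwards [hposn] with n hn
    simp only [hD, Real.log_div (ne_of_gt hn.1) (ne_of_gt hn.2.1)]
  rcases eq_or_lt_of_le hx0 with hx | hx
  · -- x = 0
    have hDbot : Tendsto D atTop atBot := by
      apply Tendsto.congr' hDlog
      apply Real.tendsto_log_nhdsGT_zero.comp
      rw [tendsto_nhdsWithin_iff]
      constructor
      · rwa [← hx] at hrat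
      · filter_upwards [hposn] with n hn
        exact div_pos hn.1 hn.2.1
    have hε : (0:ℝ) < (p - 1) / 2 := by linarith
    have hLbot : Tendsto L atTop atBot := by
      apply tendsto_atBot_mono' atTop (f₁ := fun n => (p - (p - 1) / 2) * D n)
      · filter_upwards [hbnd _ hε] with n hn
        exact hn.2
      · exact (tendsto_const_mul_atBot_of_pos (by linarith)).2 hDbot
    have : Tendsto (fun n => Real.exp (L n)) atTop (𝓝 0) :=
      Real.tendsto_exp_atBot.comp hLbot
    rw [← hx, Real.zero_rpow (by positivity)]
    exact this.congr' hratio_eq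
  · -- 0 < x
    have hDlim : Tendsto D atTop (𝓝 (Real.log x)) := by
      apply Tendsto.congr' hDlog
      exact ((Real.continuousAt_log (ne_of_gt hx)).tendsto.comp hrat)
    have hDneg : ∀ᶠ n in atTop, D n ≤ 0 := by
      filter_upwards [hposn] with n hn
      rw [hD]; simp only [sub_nonpos]
      exact (Real.log_lt_log hn.1 (hst n)).le
    have h0 : Tendsto (fun n => L n - p * D n) atTop (𝓝 0) := by
      rw [NormedAddCommGroup.tendsto_nhds_zero]
      intro δ hδ
      set M : ℝ := |Real.log x| + 1 with hM
      have hM0 : (0:ℝ) < M := by positivity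
      have hε : (0:ℝ) < δ / (2 * M) := by positivity
      have hDabs : ∀ᶠ n in atTop, |D n| < M :=
        hDlim.abs.eventually_lt_const (by rw [hM]; linarith)
      filter_upwards [hbnd _ hε, hDabs, hDneg] with n h1 h2 h3
      have habs : |L n - p * D n| ≤ (δ / (2 * M)) * |D n| := by
        rw [abs_of_nonpos h3]
        apply abs_le.2
        have e1 : (p + δ / (2 * M)) * D n = p * D n + (δ / (2 * M)) * D n := by ring
        have e2 : (p - δ / (2 * M)) * D n = p * D n - (δ / (2 * M)) * D n := by ring
        have e3 : (δ / (2 * M)) * -D n = -((δ / (2 * M)) * D n) := by ring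
        rw [e3]
        constructor
        · have := h1.1; rw [e1] at this; linarith
        · have := h1.2; rw [e2] at this; linarith
      have : (δ / (2 * M)) * |D n| < (δ / (2 * M)) * M :=
        mul_lt_mul_of_pos_left h2 hε
      have hend : (δ / (2 * M)) * M = δ / 2 := by field_simp
      calc ‖L n - p * D n‖ = |L n - p * D n| := rfl
      _ ≤ (δ / (2 * M)) * |D n| := habs
      _ < (δ / (2 * M)) * M := this
      _ = δ / 2 := hend
      _ < δ := by linarith
    have hLlim : Tendsto L atTop (𝓝 (p * Real.log x)) := by
      have := h0.add (hDlim.const_mul p)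
      simpa using this
    have hexp : Tendsto (fun n => Real.exp (L n)) atTop (𝓝 (Real.exp (p * Real.log x))) :=
      (Real.continuous_exp.tendsto _).comp hLlim
    have hxp : Real.exp (p * Real.log x) = x ^ p := by
      rw [Real.rpow_def_of_pos hx, mul_comm]
    rw [← hxp]
    exact hexp.congr' hratio_eq
end

section
/- Suppose g ∈ C²([t₀,∞)) with g', g'' > 0, g(t) → ∞, g'(t)²/(g(t)g''(t)) → 1, t·g'(t)/g(t) → ∞ and t·g'(t)/g(t) is nondecreasing. If t_n → ∞ and x_n → x₀ ∈ [0,∞), then g(t_n − x_n·g(t_n)/g'(t_n))/g(t_n) → e^{−x₀}. -/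
open Filter Topology

/-- In the case `q = 1` (`g'²/(g g'') → 1`, `t g'/g → ∞` nondecreasing), if
`t_n → ∞` and `x_n → x₀ ≥ 0`, then `g(t_n − x_n g(t_n)/g'(t_n))/g(t_n) → e^{−x₀}`. -/
theorem stmt8 (t₀ x₀ : ℝ) (g : ℝ → ℝ) (t x : ℕ → ℝ)
    (hg : ContDiffOn ℝ 2 g (Set.Ici t₀))
    (hg' : ∀ u ≥ t₀, 0 < deriv g u)
    (hg'' : ∀ u ≥ t₀, 0 < deriv (deriv g) u)
    (hgtop : Tendsto g atTop atTop)
    (hq : Tendsto (fun u => (deriv g u) ^ 2 / (g u * deriv (deriv g) u)) atTop (𝓝 1))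
    (hP : Tendsto (fun u => u * deriv g u / g u) atTop atTop)
    (hmono : MonotoneOn (fun u => u * deriv g u / g u) (Set.Ici t₀))
    (ht : Tendsto t atTop atTop)
    (hx₀ : 0 ≤ x₀)
    (hx : Tendsto x atTop (𝓝 x₀)) :
    Tendsto (fun n => g (t n - x n * g (t n) / deriv g (t n)) / g (t n)) atTop
      (𝓝 (Real.exp (-x₀))) := by
  set φ : ℝ → ℝ := fun u => g u / deriv g u with hφdef
  have hgd : ∀ u, t₀ < u → DifferentiableAt ℝ g u := fun u hu =>
    (hg.contDiffAt (Ici_mem_nhds hu)).differentiableAt (by norm_num)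
  have hg2 : ContDiffOn ℝ 1 (deriv g) (Set.Ioi t₀) :=
    (hg.mono Set.Ioi_subset_Ici_self).deriv_of_isOpen isOpen_Ioi (by norm_num)
  have hgd' : ∀ u, t₀ < u → DifferentiableAt ℝ (deriv g) u := fun u hu =>
    ((hg2.differentiableOn (by norm_num)) u hu).differentiableAt (Ioi_mem_nhds hu)
  have hφder : ∀ u, t₀ < u →
      HasDerivAt φ (1 - g u * deriv (deriv g) u / (deriv g u) ^ 2) u := by
    intro u hu
    have h1 := (hgd u hu).hasDerivAt
    have h2 := (hgd' u hu).hasDerivAt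
    have hne : deriv g u ≠ 0 := (hg' u hu.le).ne'
    have : HasDerivAt (fun y => g y / deriv g y)
        ((deriv g u * deriv g u - g u * deriv (deriv g) u) / deriv g u ^ 2) u := h1.div h2 hne
    convert this using 1
    rw [sub_div, ← pow_two, div_self (pow_ne_zero 2 hne)]
  have hderivφ0 : Tendsto (deriv φ) atTop (𝓝 0) := by
    have hq' : Tendsto (fun u => 1 - ((deriv g u) ^ 2 / (g u * deriv (deriv g) u))⁻¹)
        atTop (𝓝 0) := by
      have h1 := hq.inv₀ one_ne_zero
      have h2 := (tendsto_const_nhds (α := ℝ) (x := (1:ℝ))).sub h1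
      simpa using h2
    apply hq'.congr'
    filter_upwards [eventually_gt_atTop t₀] with u hu
    rw [(hφder u hu).deriv, inv_div]
  set s : ℕ → ℝ := fun n => t n - x n * g (t n) / deriv g (t n) with hsdef
  have hstop : Tendsto s atTop atTop := by
    have hPt : Tendsto (fun n => (t n * deriv g (t n) / g (t n))⁻¹) atTop (𝓝 0) := by
      exact (hP.comp ht).inv_tendsto_atTop
    have h1 : Tendsto (fun n => 1 - x n * (t n * deriv g (t n) / g (t n))⁻¹) atTop (𝓝 1) := by
      have h0 := hx.mul hPt
      have h2 := (tendsto_const_nhds (α := ℕ) (x := (1:ℝ))).sub h0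
      simpa using h2
    have h2 : Tendsto (fun n => t n * (1 - x n * (t n * deriv g (t n) / g (t n))⁻¹))
        atTop atTop := ht.atTop_mul_pos one_pos h1
    apply h2.congr'
    filter_upwards [ht.eventually_gt_atTop (max t₀ 0), (hgtop.comp ht).eventually_ge_atTop 1]
      with n h1n h2n
    have htn0 : t n ≠ 0 := by
      have := lt_of_le_of_lt (le_max_right t₀ 0) h1n; positivity
    have htnt₀ : t₀ ≤ t n := le_of_lt (lt_of_le_of_lt (le_max_left t₀ 0) h1n)
    have hg'0 : deriv g (t n) ≠ 0 := (hg' _ htnt₀).ne'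
    have hgn0 : g (t n) ≠ 0 := by
      have : (1:ℝ) ≤ g (t n) := h2n; positivity
    simp only [hsdef]
    field_simp
  have hlog : ∀ u, t₀ < u → 0 < g u →
      HasDerivAt (fun v => Real.log (g v)) (deriv g u / g u) u := fun u hu hgu =>
    (hgd u hu).hasDerivAt.log hgu.ne'
  have hMVT : ∀ a b : ℝ, t₀ < a → a < b → (∀ u ∈ Set.Icc a b, 0 < g u) →
      ∃ ξ ∈ Set.Ioo a b, Real.log (g b) - Real.log (g a) = (b - a) * (deriv g ξ / g ξ) := by
    intro a b ha hab hpos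
    have hcont : ContinuousOn (fun v => Real.log (g v)) (Set.Icc a b) := fun v hv =>
      (hlog v (lt_of_lt_of_le ha hv.1) (hpos v hv)).continuousAt.continuousWithinAt
    have hder : ∀ v ∈ Set.Ioo a b, HasDerivAt (fun v => Real.log (g v)) (deriv g v / g v) v :=
      fun v hv => hlog v (ha.trans hv.1) (hpos v (Set.Ioo_subset_Icc_self hv))
    obtain ⟨ξ, hξ, heq⟩ := exists_hasDerivAt_eq_slope _ _ hab hcont hder
    refine ⟨ξ, hξ, ?_⟩
    rw [heq, mul_div_cancel₀ _ (sub_ne_zero.2 hab.ne')]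
  have hMVT2 : ∀ a b : ℝ, t₀ < a → t₀ < b → a ≠ b →
      (∀ u ∈ Set.Icc (min a b) (max a b), 0 < g u) →
      ∃ ξ ∈ Set.Ioo (min a b) (max a b),
        Real.log (g b) - Real.log (g a) = (b - a) * (deriv g ξ / g ξ) := by
    intro a b ha hb hne hpos
    rcases hne.lt_or_gt with hab | hab
    · rw [min_eq_left hab.le, max_eq_right hab.le] at hpos ⊢
      exact hMVT a b ha hab hpos
    · rw [min_eq_right hab.le, max_eq_left hab.le] at hpos ⊢
      obtain ⟨ξ, hξ, heq⟩ := hMVT b a hb hab hpos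
      exact ⟨ξ, hξ, by linarith [heq, (by ring : (a - b) * (deriv g ξ / g ξ) = -((b-a) * (deriv g ξ / g ξ)))]⟩
  have key : Tendsto (fun n => Real.log (g (s n)) - Real.log (g (t n)) + x n) atTop (𝓝 0) := by
    rw [NormedAddCommGroup.tendsto_nhds_zero]
    intro ε hε
    set M : ℝ := x₀ + 1 with hM
    have hM1 : 1 ≤ M := by linarith
    have hMpos : 0 < M := by linarith
    set δ : ℝ := min (1/(2*M)) (ε/(1 + 2*M^2)) with hδ
    have hδpos : 0 < δ := lt_min (by positivity) (by positivity)
    have hδM : δ * M ≤ 1/2 := by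
      have h1 : δ ≤ 1/(2*M) := min_le_left _ _
      have h2 : δ * M ≤ (1/(2*M)) * M := by nlinarith
      calc δ * M ≤ (1/(2*M)) * M := h2
        _ = 1/2 := by field_simp
    have hδε : 2*δ*M^2 < ε := by
      have h1 : δ ≤ ε/(1+2*M^2) := min_le_right _ _
      have hD : (0:ℝ) < 1 + 2*M^2 := by positivity
      have h2 : δ * (1 + 2*M^2) ≤ ε := by
        rw [← le_div_iff₀ hD]; exact h1
      nlinarith
    have hev1 : ∀ᶠ u in atTop, |deriv φ u| ≤ δ := by
      filter_upwards [NormedAddCommGroup.tendsto_nhds_zero.1 hderivφ0 δ hδpos] with u hu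
      simpa [Real.norm_eq_abs] using hu.le
    have hev2 : ∀ᶠ u in atTop, (1:ℝ) ≤ g u := hgtop.eventually_ge_atTop 1
    obtain ⟨T₁, hT₁⟩ := eventually_atTop.1 (hev1.and hev2)
    set T : ℝ := max T₁ (t₀ + 1) with hT
    have hTt₀ : t₀ < T := lt_of_lt_of_le (by linarith) (le_max_right _ _)
    have hTprop : ∀ u, T ≤ u → |deriv φ u| ≤ δ ∧ (1:ℝ) ≤ g u := fun u hu =>
      hT₁ u ((le_max_left _ _).trans hu)
    have hTgt : ∀ u, T ≤ u → t₀ < u := fun u hu => lt_of_lt_of_le hTt₀ hu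
    have hLip : ∀ u ∈ Set.Ici T, ∀ v ∈ Set.Ici T, |φ v - φ u| ≤ δ * |v - u| := by
      intro u hu v hv
      have h := Convex.norm_image_sub_le_of_norm_hasDerivWithin_le
        (f := φ) (f' := fun w => deriv φ w) (s := Set.Ici T) (C := δ)
        (fun w hw => ((hφder w (hTgt w hw)).differentiableAt.hasDerivAt).hasDerivWithinAt)
        (fun w hw => by simpa [Real.norm_eq_abs] using (hTprop w hw).1)
        (convex_Ici T) hu hv
      simpa [Real.norm_eq_abs] using h
    have hxev : ∀ᶠ n in atTop, |x n| ≤ M := by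
      filter_upwards [hx (Metric.ball_mem_nhds x₀ one_pos)] with n hn
      rw [Set.mem_preimage, Metric.mem_ball, Real.dist_eq] at hn
      have h1 := abs_sub_abs_le_abs_sub (x n) x₀
      have h2 : |x₀| = x₀ := abs_of_nonneg hx₀
      rw [hM]; linarith
    filter_upwards [ht.eventually_ge_atTop T, hstop.eventually_ge_atTop T, hxev]
      with n htn hsn hxn
    have htn₀ : t₀ < t n := hTgt _ htn
    have hg'tn : 0 < deriv g (t n) := hg' _ htn₀.le
    have hgtn : (1:ℝ) ≤ g (t n) := (hTprop _ htn).2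
    set c : ℝ := g (t n) / deriv g (t n) with hc
    have hcpos : 0 < c := div_pos (by linarith) hg'tn
    have hsne : s n = t n - x n * c := by rw [hc, hsdef]; ring
    rcases eq_or_ne (x n) 0 with h0 | h0
    · have hst : s n = t n := by rw [hsne, h0]; ring
      rw [hst, h0]
      simpa using hε
    · have hxc : x n * c ≠ 0 := mul_ne_zero h0 hcpos.ne'
      have hsnet : s n ≠ t n := by
        rw [hsne]; intro hcontra
        exact hxc (by linarith)
      have hposIcc : ∀ u ∈ Set.Icc (min (s n) (t n)) (max (s n) (t n)), 0 < g u := by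
        intro u hu
        have hTu : T ≤ u := le_trans (le_min hsn htn) hu.1
        linarith [(hTprop u hTu).2]
      obtain ⟨ξ, hξ, heq⟩ := hMVT2 (s n) (t n) (hTgt _ hsn) (hTgt _ htn) hsnet hposIcc
      have hξT : T ≤ ξ := le_trans (le_min hsn htn) hξ.1.le
      have hg'ξ : 0 < deriv g ξ := hg' _ (hTgt _ hξT).le
      have hgξ : (1:ℝ) ≤ g ξ := (hTprop _ hξT).2
      have hφξpos : 0 < φ ξ := div_pos (by linarith) hg'ξ
      have hts : t n - s n = x n * c := by rw [hsne]; ring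
      have hxcabs : |x n * c| = |x n| * c := by rw [abs_mul, abs_of_pos hcpos]
      have hdist : |ξ - t n| ≤ |x n| * c := by
        have h1 : min (s n) (t n) ≤ ξ := hξ.1.le
        have h2 : ξ ≤ max (s n) (t n) := hξ.2.le
        have hla := le_abs_self (x n * c)
        have hna := neg_abs_le (x n * c)
        have habsnn : 0 ≤ |x n| * c := by positivity
        rw [abs_le]
        rcases le_total (s n) (t n) with h | h
        · rw [min_eq_left h] at h1
          rw [max_eq_right h] at h2
          constructor <;> linarith [hsne]
        · rw [min_eq_right h] at h1
          rw [max_eq_left h] at h2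
          constructor <;> linarith [hsne]
      have hφc : φ (t n) = c := by simp only [hφdef, hc]
      have hφdiff : |φ ξ - c| ≤ δ * (M * c) := by
        have h8 : |φ ξ - φ (t n)| ≤ δ * |ξ - t n| :=
          hLip (t n) (Set.mem_Ici.2 htn) ξ (Set.mem_Ici.2 hξT)
        rw [hφc] at h8
        have h9 : δ * |ξ - t n| ≤ δ * (|x n| * c) :=
          mul_le_mul_of_nonneg_left hdist hδpos.le
        have h10 : δ * (|x n| * c) ≤ δ * (M * c) :=
          mul_le_mul_of_nonneg_left (mul_le_mul_of_nonneg_right hxn hcpos.le) hδpos.le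
        linarith
      have hφξlb : c/2 ≤ φ ξ := by
        have h11 : δ * (M * c) ≤ (1/2) * c := by
          have := mul_le_mul_of_nonneg_right hδM hcpos.le
          calc δ * (M * c) = δ * M * c := by ring
            _ ≤ (1/2) * c := this
        have h12 := (abs_le.1 hφdiff).1
        clear_value c δ M φ
        linarith
      have hφne : φ ξ ≠ 0 := hφξpos.ne'
      have hφinv : deriv g ξ / g ξ = 1 / φ ξ := by
        show deriv g ξ / g ξ = 1 / (g ξ / deriv g ξ)
        rw [one_div_div]
      have hE : Real.log (g (t n)) - Real.log (g (s n)) = (x n * c) * (1 / φ ξ) := by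
        rw [heq, hts, hφinv]
      have hLval : Real.log (g (s n)) - Real.log (g (t n)) + x n = x n * (φ ξ - c) / φ ξ := by
        have hLog : Real.log (g (s n)) - Real.log (g (t n)) = -(x n * c) * (1 / φ ξ) := by
          linarith
        rw [hLog]
        field_simp
        ring
      rw [hLval, Real.norm_eq_abs]
      have habs : |x n * (φ ξ - c) / φ ξ| ≤ 2*δ*M^2 := by
        rw [abs_div, abs_mul, abs_of_pos hφξpos]
        have h1 : |x n| * |φ ξ - c| ≤ M * (δ * (M * c)) :=
          mul_le_mul hxn hφdiff (abs_nonneg _) hMpos.le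
        calc |x n| * |φ ξ - c| / φ ξ ≤ (M * (δ * (M * c))) / (c/2) := by
              apply div_le_div₀ (by positivity) h1 (by linarith) hφξlb
          _ = 2*δ*M^2 := by field_simp
      clear_value c δ M φ s
      linarith
  have hL : Tendsto (fun n => Real.log (g (s n)) - Real.log (g (t n))) atTop (𝓝 (-x₀)) := by
    have h := key.sub hx
    have h0 : (0:ℝ) - x₀ = -x₀ := by ring
    rw [h0] at h
    apply h.congr
    intro n
    ring
  have hexp : Tendsto (fun n => Real.exp (Real.log (g (s n)) - Real.log (g (t n)))) atTop
      (𝓝 (Real.exp (-x₀))) := (Real.continuous_exp.tendsto _).comp hL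
  apply hexp.congr'
  filter_upwards [(hgtop.comp hstop).eventually_ge_atTop 1, (hgtop.comp ht).eventually_ge_atTop 1]
    with n h1 h2
  have hgs : 0 < g (s n) := by have h : (1:ℝ) ≤ g (s n) := h1; linarith
  have hgt : 0 < g (t n) := by have h : (1:ℝ) ≤ g (t n) := h2; linarith
  rw [Real.exp_sub, Real.exp_log hgs, Real.exp_log hgt]
end

section
/- Let g₀ ∈ C²([t₀,∞)) satisfy: t·g₀'(t) → ∞, g₀''(t)/g₀'(t)² → 0 as t → ∞, t·g₀'(t) is nondecreasing, and g₀'(t)/g₀(t) is nonincreasing. Let g₁(t) = exp(g₀(t)). Then g₁(t)·g₁''(t)/g₁'(t)² → 1 and t·g₁'(t)/g₁(t) → ∞ as t → ∞, g₁(t) → ∞, and g₁''(t)/g₁'(t)² → 0. -/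
open Filter Topology

/-- If `g₀` satisfies `t g₀' → ∞`, `g₀''/(g₀')² → 0`, `t g₀'` nondecreasing and
`g₀'/g₀` nonincreasing, then `g₁ = exp ∘ g₀` satisfies `g₁ g₁''/(g₁')² → 1`,
`t g₁'/g₁ → ∞`, `g₁ → ∞`, and `g₁''/(g₁')² → 0`. -/
theorem stmt10 (t₀ : ℝ) (g₀ : ℝ → ℝ)
    (hg : ContDiffOn ℝ 2 g₀ (Set.Ici t₀))
    (hgpos : ∀ t ≥ t₀, 0 < g₀ t)
    (hg' : ∀ t ≥ t₀, 0 < deriv g₀ t)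
    (h1 : Tendsto (fun t => t * deriv g₀ t) atTop atTop)
    (h2 : Tendsto (fun t => deriv (deriv g₀) t / (deriv g₀ t) ^ 2) atTop (𝓝 0))
    (h3 : MonotoneOn (fun t => t * deriv g₀ t) (Set.Ici t₀))
    (h4 : AntitoneOn (fun t => deriv g₀ t / g₀ t) (Set.Ici t₀)) :
    Tendsto (fun t => Real.exp (g₀ t) * deriv (deriv (fun s => Real.exp (g₀ s))) t /
        (deriv (fun s => Real.exp (g₀ s)) t) ^ 2) atTop (𝓝 1) ∧
    Tendsto (fun t => t * deriv (fun s => Real.exp (g₀ s)) t / Real.exp (g₀ t)) atTop atTop ∧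
    Tendsto (fun t => Real.exp (g₀ t)) atTop atTop ∧
    Tendsto (fun t => deriv (deriv (fun s => Real.exp (g₀ s))) t /
        (deriv (fun s => Real.exp (g₀ s)) t) ^ 2) atTop (𝓝 0) := by
  have hgI : ContDiffOn ℝ 2 g₀ (Set.Ioi t₀) := hg.mono Set.Ioi_subset_Ici_self
  have hdiff : ∀ t > t₀, HasDerivAt g₀ (deriv g₀ t) t := by
    intro t ht
    have h := (hg.contDiffAt (Ici_mem_nhds ht)).differentiableAt (by norm_num)
    exact h.hasDerivAt
  have hdg1 : ContDiffOn ℝ 1 (deriv g₀) (Set.Ioi t₀) :=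
    hgI.deriv_of_isOpen isOpen_Ioi (by norm_num)
  have hdiff2 : ∀ t > t₀, HasDerivAt (deriv g₀) (deriv (deriv g₀) t) t := by
    intro t ht
    have h := (hdg1.differentiableOn (by norm_num)).differentiableAt
      (isOpen_Ioi.mem_nhds ht)
    exact h.hasDerivAt
  -- first derivative of g₁
  have hE1 : ∀ t > t₀, deriv (fun s => Real.exp (g₀ s)) t = Real.exp (g₀ t) * deriv g₀ t := by
    intro t ht
    exact ((hdiff t ht).exp).deriv
  -- second derivative of g₁
  have hE2 : ∀ t > t₀, deriv (deriv (fun s => Real.exp (g₀ s))) t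
      = Real.exp (g₀ t) * ((deriv g₀ t) ^ 2 + deriv (deriv g₀) t) := by
    intro t ht
    have heq : deriv (fun s => Real.exp (g₀ s)) =ᶠ[𝓝 t]
        fun s => Real.exp (g₀ s) * deriv g₀ s := by
      filter_upwards [Ioi_mem_nhds ht] with s hs
      exact ((hdiff s hs).exp).deriv
    rw [heq.deriv_eq]
    have hprod := ((hdiff t ht).exp).mul (hdiff2 t ht)
    rw [show (fun s => Real.exp (g₀ s) * deriv g₀ s) = (fun x => Real.exp (g₀ x)) * deriv g₀ from rfl, hprod.deriv]; ring
  -- g₀ tends to infinity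
  have hg0top : Tendsto g₀ atTop atTop := by
    obtain ⟨T, hT⟩ := (h1.eventually_ge_atTop 1).exists_forall_of_atTop
    set T' : ℝ := max T (max t₀ 0) + 1 with hT'def
    have hT't₀ : t₀ < T' := by
      have : max t₀ 0 ≤ max T (max t₀ 0) := le_max_right _ _
      have h0 : t₀ ≤ max t₀ 0 := le_max_left _ _
      linarith
    have hT'0 : (0:ℝ) < T' := by
      have : (0:ℝ) ≤ max t₀ 0 := le_max_right _ _
      have : max t₀ 0 ≤ max T (max t₀ 0) := le_max_right _ _
      have h0 : (0:ℝ) ≤ max t₀ 0 := le_max_right _ _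
      linarith
    have hT'T : T ≤ T' := by
      have : T ≤ max T (max t₀ 0) := le_max_left _ _
      linarith
    have hmono : MonotoneOn (fun t => g₀ t - Real.log t) (Set.Ici T') := by
      apply monotoneOn_of_deriv_nonneg (convex_Ici T')
      · apply ContinuousOn.sub
        · exact (hg.continuousOn).mono (Set.Ici_subset_Ici.2 hT't₀.le)
        · exact Real.continuousOn_log.mono fun x hx => by
            have : T' ≤ x := hx
            exact ne_of_gt (lt_of_lt_of_le hT'0 this)
      · intro x hx
        rw [interior_Ici] at hx
        have hx0 : (0:ℝ) < x := lt_trans hT'0 hx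
        exact ((hdiff x (lt_trans hT't₀ hx)).sub (Real.hasDerivAt_log hx0.ne')).differentiableAt.differentiableWithinAt
      · intro x hx
        rw [interior_Ici] at hx
        have hx0 : (0:ℝ) < x := lt_trans hT'0 hx
        have hd := ((hdiff x (lt_trans hT't₀ hx)).sub (Real.hasDerivAt_log hx0.ne')).deriv
        rw [show (fun t => g₀ t - Real.log t) = g₀ - Real.log from rfl, hd, sub_nonneg]
        have h1x : 1 ≤ x * deriv g₀ x := hT x (le_trans hT'T hx.le)
        rw [inv_eq_one_div, div_le_iff₀ hx0, mul_comm]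
        exact h1x
    have hlower : ∀ t ≥ T', g₀ T' - Real.log T' + Real.log t ≤ g₀ t := by
      intro t ht
      have := hmono (Set.self_mem_Ici) (show t ∈ Set.Ici T' from ht) ht
      simp only at this
      linarith
    apply tendsto_atTop_mono' atTop
      (f₁ := fun t => g₀ T' - Real.log T' + Real.log t)
      (by filter_upwards [eventually_ge_atTop T'] with t ht; exact hlower t ht)
      (tendsto_atTop_add_const_left _ _ Real.tendsto_log_atTop)
  have hexp_top : Tendsto (fun t => Real.exp (g₀ t)) atTop atTop :=
    Real.tendsto_exp_atTop.comp hg0top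
  refine ⟨?_, ?_, hexp_top, ?_⟩
  · -- g₁ g₁'' / g₁'² → 1
    have heq : ∀ᶠ t in atTop, Real.exp (g₀ t) * deriv (deriv (fun s => Real.exp (g₀ s))) t /
        (deriv (fun s => Real.exp (g₀ s)) t) ^ 2
        = 1 + deriv (deriv g₀) t / (deriv g₀ t) ^ 2 := by
      filter_upwards [eventually_gt_atTop t₀] with t ht
      rw [hE1 t ht, hE2 t ht]
      have hd0 : deriv g₀ t ≠ 0 := (hg' t ht.le).ne'
      have he0 : Real.exp (g₀ t) ≠ 0 := (Real.exp_pos _).ne'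
      field_simp
    have : Tendsto (fun t => 1 + deriv (deriv g₀) t / (deriv g₀ t) ^ 2) atTop (𝓝 1) := by
      have := tendsto_const_nhds.add h2 (f := fun _ : ℝ => (1:ℝ)) (x := atTop)
      simpa using this
    exact this.congr' (heq.mono fun t h => h.symm)
  · -- t g₁' / g₁ → ∞
    apply h1.congr'
    filter_upwards [eventually_gt_atTop t₀] with t ht
    rw [hE1 t ht]
    field_simp
  · -- g₁'' / g₁'² → 0
    have heq : ∀ᶠ t in atTop, deriv (deriv (fun s => Real.exp (g₀ s))) t /
        (deriv (fun s => Real.exp (g₀ s)) t) ^ 2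
        = (1 + deriv (deriv g₀) t / (deriv g₀ t) ^ 2) * (Real.exp (g₀ t))⁻¹ := by
      filter_upwards [eventually_gt_atTop t₀] with t ht
      rw [hE1 t ht, hE2 t ht]
      have hd0 : deriv g₀ t ≠ 0 := (hg' t ht.le).ne'
      have he0 : Real.exp (g₀ t) ≠ 0 := (Real.exp_pos _).ne'
      field_simp
    have h1lim : Tendsto (fun t => 1 + deriv (deriv g₀) t / (deriv g₀ t) ^ 2) atTop (𝓝 1) := by
      have := tendsto_const_nhds.add h2 (f := fun _ : ℝ => (1:ℝ)) (x := atTop)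
      simpa using this
    have hinv : Tendsto (fun t => (Real.exp (g₀ t))⁻¹) atTop (𝓝 0) :=
      hexp_top.inv_tendsto_atTop
    have := h1lim.mul hinv
    rw [mul_zero] at this
    exact this.congr' (heq.mono fun t h => h.symm)
end

section
/- For a ∈ (0,2] and b = (√2/a)^a, the function z(r) = log(2a²b / (r^{2−a}(1 + b r^a)²)) on (0,∞) satisfies −z'' − (1/r) z' = e^{z} on (0,∞), z(a/√2) = 0, (a/√2)·z'(a/√2) = −2, and ∫₀^∞ e^{z(r)} r dr = 2a. -/
open Filter Topology MeasureTheory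

lemma aux_hasDeriv (a b : ℝ) (ha : 0 < a) (hb : 0 < b) {r : ℝ} (hr : 0 < r) :
    HasDerivAt (fun r : ℝ => Real.log (2 * a ^ 2 * b / (r ^ ((2:ℝ) - a) * (1 + b * r ^ a) ^ 2)))
      ((a - 2) * r⁻¹ - 2 * (b * (a * r ^ (a - 1)) / (1 + b * r ^ a))) r := by
  have hd : ∀ x : ℝ, 0 < x → 0 < 1 + b * x ^ a := fun x hx => by positivity
  have hC : (0:ℝ) < 2 * a ^ 2 * b := by positivity
  have hpow : HasDerivAt (fun x : ℝ => x ^ a) (a * r ^ (a - 1)) r :=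
    Real.hasDerivAt_rpow_const (Or.inl hr.ne')
  have hin : HasDerivAt (fun x : ℝ => 1 + b * x ^ a) (b * (a * r ^ (a - 1))) r :=
    (hpow.const_mul b).const_add 1
  have hlg : HasDerivAt (fun x : ℝ => Real.log (1 + b * x ^ a))
      (b * (a * r ^ (a - 1)) / (1 + b * r ^ a)) r := hin.log (hd r hr).ne'
  have h1 : HasDerivAt (fun x : ℝ => Real.log (2 * a ^ 2 * b) +
      ((a - 2) * Real.log x - 2 * Real.log (1 + b * x ^ a)))
      ((a - 2) * r⁻¹ - 2 * (b * (a * r ^ (a - 1)) / (1 + b * r ^ a))) r :=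
    (((Real.hasDerivAt_log hr.ne').const_mul (a - 2)).sub (hlg.const_mul 2)).const_add _
  refine h1.congr_of_eventuallyEq ?_
  filter_upwards [Ioi_mem_nhds hr] with x hx
  have hx' : (0:ℝ) < x := hx
  have hxp : (0:ℝ) < x ^ ((2:ℝ) - a) := Real.rpow_pos_of_pos hx' _
  have hdx := hd x hx'
  rw [Real.log_div hC.ne' (by positivity), Real.log_mul hxp.ne' (by positivity),
    Real.log_rpow hx', Real.log_pow]
  push_cast
  ring

lemma aux_hasDeriv2 (a b : ℝ) (hb : 0 < b) {r : ℝ} (hr : 0 < r) :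
    HasDerivAt (fun x : ℝ => (a - 2) * x⁻¹ - 2 * (b * (a * x ^ (a - 1)) / (1 + b * x ^ a)))
      ((a - 2) * (-(r ^ 2)⁻¹) - 2 * ((b * (a * ((a - 1) * r ^ (a - 1 - 1))) * (1 + b * r ^ a)
        - b * (a * r ^ (a - 1)) * (b * (a * r ^ (a - 1)))) / (1 + b * r ^ a) ^ 2)) r := by
  have hd : (0:ℝ) < 1 + b * r ^ a := by positivity
  have hpow : HasDerivAt (fun x : ℝ => x ^ a) (a * r ^ (a - 1)) r :=
    Real.hasDerivAt_rpow_const (Or.inl hr.ne')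
  have hpow' : HasDerivAt (fun x : ℝ => x ^ (a - 1)) ((a - 1) * r ^ (a - 1 - 1)) r :=
    Real.hasDerivAt_rpow_const (Or.inl hr.ne')
  have hin : HasDerivAt (fun x : ℝ => 1 + b * x ^ a) (b * (a * r ^ (a - 1))) r :=
    (hpow.const_mul b).const_add 1
  have hnum : HasDerivAt (fun x : ℝ => b * (a * x ^ (a - 1))) (b * (a * ((a - 1) * r ^ (a - 1 - 1)))) r :=
    (hpow'.const_mul a).const_mul b
  exact ((hasDerivAt_inv hr.ne').const_mul _).sub ((hnum.div hin hd.ne').const_mul 2)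

lemma aux_ode (a b : ℝ) (hb : 0 < b) {r : ℝ} (hr : 0 < r) :
    -((a - 2) * (-(r ^ 2)⁻¹) - 2 * ((b * (a * ((a - 1) * r ^ (a - 1 - 1))) * (1 + b * r ^ a)
        - b * (a * r ^ (a - 1)) * (b * (a * r ^ (a - 1)))) / (1 + b * r ^ a) ^ 2))
      - (1 / r) * ((a - 2) * r⁻¹ - 2 * (b * (a * r ^ (a - 1)) / (1 + b * r ^ a)))
      = 2 * a ^ 2 * b / (r ^ ((2:ℝ) - a) * (1 + b * r ^ a) ^ 2) := by
  have hd : (0:ℝ) < 1 + b * r ^ a := by positivity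
  have ht : (0:ℝ) < r ^ a := Real.rpow_pos_of_pos hr a
  have e1 : r ^ (a - 1) = r ^ a / r := by rw [Real.rpow_sub hr, Real.rpow_one]
  have e2 : r ^ (a - 1 - 1) = r ^ a / r / r := by
    rw [Real.rpow_sub hr, Real.rpow_sub hr, Real.rpow_one]
  have e3 : r ^ ((2:ℝ) - a) = r ^ 2 / r ^ a := by
    rw [Real.rpow_sub hr]; norm_num [Real.rpow_two]
  rw [e1, e2, e3]
  field_simp
  ring

/-- For `a ∈ (0,2]` and `b = (√2/a)^a`, the singular bubble
`z(r) = log(2a²b/(r^{2−a}(1+b r^a)²))` solves the radial Liouville equation on `(0,∞)`,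
satisfies `z(a/√2) = 0`, `(a/√2) z'(a/√2) = −2`, and has mass `2a`. -/
theorem stmt12 (a : ℝ) (ha : 0 < a) (ha2 : a ≤ 2) :
    let b : ℝ := (Real.sqrt 2 / a) ^ a
    let z : ℝ → ℝ := fun r =>
      Real.log (2 * a ^ 2 * b / (r ^ ((2:ℝ) - a) * (1 + b * r ^ a) ^ 2))
    (∀ r > (0:ℝ), -(deriv (deriv z) r) - (1 / r) * deriv z r = Real.exp (z r)) ∧
    z (a / Real.sqrt 2) = 0 ∧
    (a / Real.sqrt 2) * deriv z (a / Real.sqrt 2) = -2 ∧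
    (∫ r in Set.Ioi (0:ℝ), Real.exp (z r) * r) = 2 * a := by
  intro b z
  have hs2 : (0:ℝ) < Real.sqrt 2 := Real.sqrt_pos.mpr two_pos
  have hb : 0 < b := Real.rpow_pos_of_pos (by positivity) a
  set g : ℝ → ℝ := fun x => (a - 2) * x⁻¹ - 2 * (b * (a * x ^ (a - 1)) / (1 + b * x ^ a)) with hg
  have hz : ∀ x ∈ Set.Ioi (0:ℝ), HasDerivAt z (g x) x := fun x hx =>
    aux_hasDeriv a b ha hb hx
  have hdz : ∀ x ∈ Set.Ioi (0:ℝ), deriv z x = g x := fun x hx => (hz x hx).deriv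
  -- key identity at r0 = a/√2
  have hr0 : (0:ℝ) < a / Real.sqrt 2 := by positivity
  have hkey : b * (a / Real.sqrt 2) ^ a = 1 := by
    rw [show b = (Real.sqrt 2 / a) ^ a from rfl, ← Real.mul_rpow (by positivity) hr0.le]
    rw [show Real.sqrt 2 / a * (a / Real.sqrt 2) = 1 by field_simp, Real.one_rpow]
  have hr0a : (a / Real.sqrt 2) ^ a = b⁻¹ := by
    field_simp [hb.ne'] at hkey ⊢
    linarith [hkey]
  have h2sq : (a / Real.sqrt 2) ^ (2:ℕ) = a ^ 2 / 2 := by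
    rw [div_pow, Real.sq_sqrt (by norm_num : (0:ℝ) ≤ 2)]
  constructor
  · -- ODE
    intro r hr
    have hd : (0:ℝ) < 1 + b * r ^ a := by positivity
    have hEq : deriv z =ᶠ[𝓝 r] g :=
      eventually_of_mem (Ioi_mem_nhds hr) fun x hx => hdz x hx
    have h2 : deriv (deriv z) r = deriv g r := hEq.deriv_eq
    rw [h2, hdz r hr, (aux_hasDeriv2 a b hb hr).deriv, hg]
    simp only []
    rw [aux_ode a b hb hr]
    rw [Real.exp_log (by positivity)]
  refine ⟨?_, ?_, ?_⟩
  · -- z(a/√2) = 0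
    show Real.log (2 * a ^ 2 * b /
      ((a / Real.sqrt 2) ^ ((2:ℝ) - a) * (1 + b * (a / Real.sqrt 2) ^ a) ^ 2)) = 0
    have e3 : (a / Real.sqrt 2) ^ ((2:ℝ) - a)
        = (a / Real.sqrt 2) ^ (2:ℕ) / (a / Real.sqrt 2) ^ a := by
      rw [Real.rpow_sub hr0]; norm_num [Real.rpow_two]
    rw [hkey, e3, hr0a, h2sq]
    have : 2 * a ^ 2 * b / (a ^ 2 / 2 / b⁻¹ * (1 + 1) ^ 2) = 1 := by
      field_simp
      ring
    rw [this, Real.log_one]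
  · -- slope condition
    rw [hdz _ hr0, hg]
    simp only []
    have e1 : (a / Real.sqrt 2) ^ (a - 1) = (a / Real.sqrt 2) ^ a / (a / Real.sqrt 2) := by
      rw [Real.rpow_sub hr0, Real.rpow_one]
    rw [e1, hr0a, mul_inv_cancel₀ hb.ne']
    field_simp
    ring
  · -- integral
    set F : ℝ → ℝ := fun x => -(2 * a) * (1 + b * x ^ a)⁻¹ with hF
    have hFd : ∀ x ∈ Set.Ioi (0:ℝ), HasDerivAt F (Real.exp (z x) * x) x := by
      intro x hx
      have hx' : (0:ℝ) < x := hx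
      have hd : (0:ℝ) < 1 + b * x ^ a := by positivity
      have hpow : HasDerivAt (fun y : ℝ => y ^ a) (a * x ^ (a - 1)) x :=
        Real.hasDerivAt_rpow_const (Or.inl hx'.ne')
      have hin : HasDerivAt (fun y : ℝ => 1 + b * y ^ a) (b * (a * x ^ (a - 1))) x :=
        (hpow.const_mul b).const_add 1
      have hder := (hin.inv hd.ne').const_mul (-(2 * a))
      refine hder.congr_deriv ?_
      have hexp : Real.exp (z x)
          = 2 * a ^ 2 * b / (x ^ ((2:ℝ) - a) * (1 + b * x ^ a) ^ 2) :=
        Real.exp_log (by positivity)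
      have e1 : x ^ (a - 1) = x ^ a / x := by rw [Real.rpow_sub hx', Real.rpow_one]
      have e3 : x ^ ((2:ℝ) - a) = x ^ 2 / x ^ a := by
        rw [Real.rpow_sub hx']; norm_num [Real.rpow_two]
      have ht : (0:ℝ) < x ^ a := Real.rpow_pos_of_pos hx' a
      rw [hexp, e1, e3]
      field_simp
    have hcont : ContinuousWithinAt F (Set.Ici (0:ℝ)) 0 := by
      have hca : ContinuousAt (fun x : ℝ => x ^ a) 0 :=
        Real.continuousAt_rpow_const 0 a (Or.inr ha.le)
      have : ContinuousAt F 0 := by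
        apply ContinuousAt.mul continuousAt_const
        apply ContinuousAt.inv₀ (continuousAt_const.add (continuousAt_const.mul hca))
        simp [Real.zero_rpow ha.ne']
      exact this.continuousWithinAt
    have htop : Tendsto F atTop (𝓝 0) := by
      have h1 : Tendsto (fun x : ℝ => 1 + b * x ^ a) atTop atTop :=
        tendsto_atTop_add_const_left _ 1 ((tendsto_rpow_atTop ha).const_mul_atTop hb)
      have h2 : Tendsto (fun x : ℝ => (1 + b * x ^ a)⁻¹) atTop (𝓝 0) :=
        h1.inv_tendsto_atTop
      have h3 := h2.const_mul (-(2 * a))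
      rw [mul_zero] at h3
      exact h3
    have hpos : ∀ x ∈ Set.Ioi (0:ℝ), 0 ≤ Real.exp (z x) * x := fun x hx =>
      mul_nonneg (Real.exp_nonneg _) (le_of_lt hx)
    have hint := integral_Ioi_of_hasDerivAt_of_nonneg hcont hFd hpos htop
    rw [hint, hF]
    simp [Real.zero_rpow ha.ne']
end

section
/- Fix p ∈ (2, ∞). Define a₁ = 2, δ₁ = 1, and recursively: δ_{k+1} is the unique number in (0, δ_k) satisfying (2p/(2+a_k))(1 − δ_{k+1}/δ_k) − 1 + (δ_{k+1}/δ_k)^p = 0, and a_{k+1} = 2 − (δ_{k+1}/δ_k)^{p−1}(2+a_k). Then for every k, a_k ∈ (0,2] and δ_k ∈ (0,1], and the recursion is well-defined (i.e. such δ_{k+1} exists and is unique, and a_{k+1} ∈ (0,2)). -/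
open Filter Topology Set


lemma tangent_ineq' {p t : ℝ} (hp : 1 < p) (ht0 : 0 < t) (ht1 : t < 1) :
    t ^ p + p * t ^ (p - 1) * (1 - t) < 1 := by
  have hs : (0:ℝ) < 1 / t - 1 := by
    rw [lt_sub_iff_add_lt, zero_add, lt_div_iff₀ ht0, one_mul]; exact ht1
  have hB := one_add_mul_self_lt_rpow_one_add (s := 1/t - 1) (by linarith) (ne_of_gt hs) hp
  have h1 : (1 + (1/t - 1)) = 1/t := by ring
  rw [h1, one_div, Real.inv_rpow ht0.le] at hB
  have hppos : (0:ℝ) < t ^ p := Real.rpow_pos_of_pos ht0 p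
  have hpt : t ^ (p-1) = t ^ p / t := by rw [Real.rpow_sub ht0, Real.rpow_one]
  have key := mul_lt_mul_of_pos_left hB hppos
  rw [mul_inv_cancel₀ (ne_of_gt hppos)] at key
  calc t ^ p + p * t ^ (p - 1) * (1 - t)
      = t ^ p * (1 + p * (t⁻¹ - 1)) := by rw [hpt]; field_simp
    _ < 1 := key

/-- Uniqueness of roots of `c(1-t) - 1 + t^p` in `(0,1)`. -/
lemma root_uniq {p c t₁ t₂ : ℝ} (hp : 1 < p)
    (h₁ : 0 < t₁ ∧ t₁ < 1 ∧ c * (1 - t₁) - 1 + t₁ ^ p = 0)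
    (h₂ : 0 < t₂ ∧ t₂ < 1 ∧ c * (1 - t₂) - 1 + t₂ ^ p = 0) : t₁ = t₂ := by
  by_contra hne
  wlog hlt : t₁ < t₂ generalizing t₁ t₂
  · exact this h₂ h₁ (Ne.symm hne) (lt_of_le_of_ne (not_lt.mp hlt) (Ne.symm hne))
  obtain ⟨h10, h11, h1e⟩ := h₁
  obtain ⟨h20, h21, h2e⟩ := h₂
  set lam : ℝ := (1 - t₂) / (1 - t₁) with hlam
  set mu : ℝ := (t₂ - t₁) / (1 - t₁) with hmu
  have h1t1 : (0:ℝ) < 1 - t₁ := by linarith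
  have hne1 : (1:ℝ) - t₁ ≠ 0 := ne_of_gt h1t1
  have hlam0 : 0 < lam := div_pos (by linarith) h1t1
  have hmu0 : 0 < mu := div_pos (by linarith) h1t1
  have hsum : lam + mu = 1 := by rw [hlam, hmu]; field_simp; ring
  have h : lam * (1 - t₁) = 1 - t₂ := by rw [hlam]; field_simp
  have hcomb : lam * t₁ + mu * 1 = t₂ := by rw [hlam, hmu]; field_simp; ring
  have hconv := (strictConvexOn_rpow hp).2 (mem_Ici.mpr h10.le)
    (mem_Ici.mpr (by norm_num : (0:ℝ) ≤ 1))
    (by intro hcon; exact absurd hcon (by linarith)) hlam0 hmu0 hsum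
  simp only [smul_eq_mul] at hconv
  rw [hcomb, Real.one_rpow] at hconv
  have e1 : t₁ ^ p = 1 - c * (1 - t₁) := by linarith
  have e2 : t₂ ^ p = 1 - c * (1 - t₂) := by linarith
  rw [e1, e2] at hconv
  have hRHS : lam * (1 - c * (1 - t₁)) + mu * 1 = 1 - c * (1 - t₂) := by
    linear_combination (-c) * h + hsum
  rw [hRHS] at hconv
  exact lt_irrefl _ hconv

/-- Existence of a root with the tangent-slope property. -/
lemma root_exists {p a : ℝ} (hp : 2 < p) (ha : 0 < a) (ha2 : a ≤ 2) :
    ∃ t : ℝ, 0 < t ∧ t < 1 ∧ (2*p/(2+a)) * (1 - t) - 1 + t ^ p = 0 ∧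
      t ^ (p-1) * (2+a) < 2 := by
  set c : ℝ := 2*p/(2+a) with hc
  have h2a : (0:ℝ) < 2 + a := by linarith
  have hc1 : 1 < c := by rw [hc, lt_div_iff₀ h2a]; nlinarith
  have hcp : c < p := by rw [hc, div_lt_iff₀ h2a]; nlinarith
  have hcpos : 0 < c := by linarith
  have hp1 : (1:ℝ) < p := by linarith
  have hp0 : (0:ℝ) < p := by linarith
  have hcpq0 : (0:ℝ) < c / p := div_pos hcpos hp0
  have hcpq1 : c / p < 1 := (div_lt_one hp0).mpr hcp
  set t₀ : ℝ := (c/p) ^ (1/(p-1)) with ht₀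
  have ht₀0 : 0 < t₀ := Real.rpow_pos_of_pos hcpq0 _
  have hexp : 0 < 1/(p-1) := div_pos one_pos (by linarith)
  have ht₀1 : t₀ < 1 := Real.rpow_lt_one hcpq0.le hcpq1 hexp
  have hme : (1/(p-1)) * (p-1) = 1 := by
    rw [one_div, inv_mul_cancel₀ (by linarith : p-(1:ℝ) ≠ 0)]
  have ht₀pow : t₀ ^ (p-1) = c / p := by
    rw [ht₀, ← Real.rpow_mul hcpq0.le, hme, Real.rpow_one]
  -- F(t₀) < 0
  have hpc : p * t₀ ^ (p-1) = c := by
    rw [ht₀pow]; field_simp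
  have htan := tangent_ineq' hp1 ht₀0 ht₀1
  have hFneg : c * (1 - t₀) - 1 + t₀ ^ p < 0 := by
    calc c * (1 - t₀) - 1 + t₀ ^ p
        = p * t₀ ^ (p-1) * (1 - t₀) - 1 + t₀ ^ p := by rw [hpc]
      _ < 0 := by linarith
  -- F(0) > 0
  have hF0 : c * (1 - 0) - 1 + (0:ℝ) ^ p = c - 1 := by
    rw [Real.zero_rpow (by linarith : p ≠ 0)]; ring
  have hcont : ContinuousOn (fun t : ℝ => c * (1 - t) - 1 + t ^ p) (Icc 0 t₀) := by
    apply ContinuousOn.add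
    · exact (((continuous_const.mul (continuous_const.sub continuous_id)).sub
        continuous_const)).continuousOn
    · intro x _
      exact (Real.continuousAt_rpow_const x p (Or.inr hp0.le)).continuousWithinAt
  have hivt := intermediate_value_Ioo' ht₀0.le hcont
  have h0mem : (0:ℝ) ∈ Ioo (c * (1 - t₀) - 1 + t₀ ^ p) (c * (1 - 0) - 1 + (0:ℝ) ^ p) := by
    rw [hF0]; exact ⟨hFneg, by linarith⟩
  obtain ⟨t, htmem, hteq⟩ := hivt h0mem
  obtain ⟨ht0, htt₀⟩ := htmem
  have ht1 : t < 1 := lt_trans htt₀ ht₀1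
  refine ⟨t, ht0, ht1, hteq, ?_⟩
  -- tangent property
  have htan2 := tangent_ineq' hp1 ht0 ht1
  have h1t : (0:ℝ) < 1 - t := by linarith
  have h6 : p * t ^ (p-1) * (1-t) < c * (1-t) := by
    simp only at hteq; linarith
  have h5 : p * t ^ (p-1) < c := lt_of_mul_lt_mul_right h6 h1t.le
  have h7 : t ^ (p-1) < 2 / (2+a) := by
    have hcp2 : c / p = 2 / (2+a) := by
      rw [hc]; field_simp
    rw [← hcp2, lt_div_iff₀ hp0]
    linarith [h5, mul_comm (t ^ (p-1)) p]
  calc t ^ (p-1) * (2+a) < (2/(2+a)) * (2+a) := by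
        exact mul_lt_mul_of_pos_right h7 h2a
    _ = 2 := by field_simp


open Classical in
noncomputable def rt (p a : ℝ) : ℝ :=
  if h : ∃ t : ℝ, 0 < t ∧ t < 1 ∧ (2*p/(2+a)) * (1 - t) - 1 + t ^ p = 0 ∧
      t ^ (p-1) * (2+a) < 2
  then h.choose else 1/2

lemma rt_spec {p a : ℝ} (hp : 2 < p) (ha : 0 < a) (ha2 : a ≤ 2) :
    0 < rt p a ∧ rt p a < 1 ∧ (2*p/(2+a)) * (1 - rt p a) - 1 + (rt p a) ^ p = 0 ∧
      (rt p a) ^ (p-1) * (2+a) < 2 := by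
  rw [rt, dif_pos (root_exists hp ha ha2)]
  exact (root_exists hp ha ha2).choose_spec

noncomputable def eseq (p : ℝ) : ℕ → ℝ × ℝ
  | 0 => (2, 1)
  | 1 => (2, 1)
  | (k+2) => (2 - (rt p (eseq p (k+1)).1) ^ (p-1) * (2 + (eseq p (k+1)).1),
              rt p (eseq p (k+1)).1 * (eseq p (k+1)).2)

lemma eseq_succ (p : ℝ) {k : ℕ} (hk : 1 ≤ k) :
    eseq p (k+1) = (2 - (rt p (eseq p k).1) ^ (p-1) * (2 + (eseq p k).1),
      rt p (eseq p k).1 * (eseq p k).2) := by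
  obtain ⟨m, rfl⟩ := Nat.exists_eq_add_of_le' hk
  rfl

lemma eseq_inv {p : ℝ} (hp : 2 < p) :
    ∀ k, 1 ≤ k → (0 < (eseq p k).1 ∧ (eseq p k).1 ≤ 2) ∧
      (0 < (eseq p k).2 ∧ (eseq p k).2 ≤ 1) := by
  intro k hk
  induction k with
  | zero => omega
  | succ n ih =>
    rcases Nat.eq_zero_or_pos n with hn | hn
    · subst hn; norm_num [eseq]
    · obtain ⟨⟨ha0, ha2⟩, hd0, hd1⟩ := ih hn
      obtain ⟨ht0, ht1, hteq, htp⟩ := rt_spec hp ha0 ha2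
      rw [eseq_succ p hn]
      dsimp only
      have htpow : 0 < (rt p (eseq p n).1) ^ (p-1) := Real.rpow_pos_of_pos ht0 _
      have hprod : 0 < (rt p (eseq p n).1) ^ (p-1) * (2 + (eseq p n).1) :=
        mul_pos htpow (by linarith)
      refine ⟨⟨by linarith, by linarith⟩, mul_pos ht0 hd0, ?_⟩
      calc rt p (eseq p n).1 * (eseq p n).2 ≤ 1 * (eseq p n).2 :=
            mul_le_mul_of_nonneg_right ht1.le hd0.le
        _ ≤ 1 := by linarith

/-- For `p > 2`, the energy recurrence `a₁ = 2`, `δ₁ = 1`,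
`(2p/(2+aₖ))(1−δ_{k+1}/δₖ) − 1 + (δ_{k+1}/δₖ)^p = 0` with `δ_{k+1} < δₖ`, and
`a_{k+1} = 2 − (δ_{k+1}/δₖ)^{p−1}(2+aₖ)` is well-defined: the sequences exist,
satisfy `aₖ ∈ (0,2]`, `δₖ ∈ (0,1]`, the defining root in `(0, δₖ)` exists and is
unique, and `a_{k+1} ∈ (0,2)`. -/
theorem stmt13 (p : ℝ) (hp : 2 < p) :
    ∃ a δ : ℕ → ℝ, a 1 = 2 ∧ δ 1 = 1 ∧
      (∀ k ≥ 1, (0 < a k ∧ a k ≤ 2) ∧ (0 < δ k ∧ δ k ≤ 1)) ∧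
      (∀ k ≥ 1,
        (∃! x : ℝ, 0 < x ∧ x < δ k ∧
          (2 * p / (2 + a k)) * (1 - x / δ k) - 1 + (x / δ k) ^ p = 0) ∧
        0 < δ (k + 1) ∧ δ (k + 1) < δ k ∧
        (2 * p / (2 + a k)) * (1 - δ (k + 1) / δ k) - 1 + (δ (k + 1) / δ k) ^ p = 0 ∧
        a (k + 1) = 2 - (δ (k + 1) / δ k) ^ (p - 1) * (2 + a k) ∧
        0 < a (k + 1) ∧ a (k + 1) < 2) := by
  refine ⟨fun k => (eseq p k).1, fun k => (eseq p k).2, rfl, rfl,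
    fun k hk => eseq_inv hp k hk, fun k hk => ?_⟩
  dsimp only
  obtain ⟨⟨ha0, ha2⟩, hd0, hd1⟩ := eseq_inv hp k hk
  obtain ⟨ht0, ht1, hteq, htp⟩ := rt_spec hp ha0 ha2
  set a := (eseq p k).1 with haa
  set d := (eseq p k).2 with hdd
  set t := rt p a with htt
  have hstep := eseq_succ p hk
  rw [← haa, ← hdd, ← htt] at hstep
  have hd1eq : (eseq p (k+1)).2 = t * d := by rw [hstep]
  have ha1eq : (eseq p (k+1)).1 = 2 - t ^ (p-1) * (2 + a) := by rw [hstep]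
  have hdiv : t * d / d = t := by
    rw [mul_div_assoc, div_self (ne_of_gt hd0), mul_one]
  have hp1 : (1:ℝ) < p := by linarith
  have hdlt : t * d < d := by
    calc t * d < 1 * d := mul_lt_mul_of_pos_right ht1 hd0
      _ = d := one_mul d
  have hprod : 0 < t ^ (p-1) * (2 + a) :=
    mul_pos (Real.rpow_pos_of_pos ht0 _) (by linarith)
  refine ⟨⟨t * d, ⟨mul_pos ht0 hd0, hdlt, ?_⟩, ?_⟩, ?_, ?_, ?_, ?_, ?_, ?_⟩
  · rw [hdiv]; exact hteq
  · rintro y ⟨hy0, hyd, hyeq⟩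
    have hs0 : 0 < y / d := div_pos hy0 hd0
    have hs1 : y / d < 1 := (div_lt_one hd0).mpr hyd
    have huni := root_uniq hp1 ⟨hs0, hs1, hyeq⟩ ⟨ht0, ht1, hteq⟩
    rw [div_eq_iff (ne_of_gt hd0)] at huni
    exact huni
  · rw [hd1eq]; exact mul_pos ht0 hd0
  · rw [hd1eq]; exact hdlt
  · rw [hd1eq, hdiv]; exact hteq
  · rw [hd1eq, hdiv, ha1eq]
  · rw [ha1eq]; linarith
  · rw [ha1eq]; linarith
end

section
/- Let (a_k), (η_k) be the sequences defined by a₁ = 2, η₁ = 1, η_{k+1} ∈ (0,η_k) solving (2/(2+a_k))·log(η_k/η_{k+1}) − 1 + η_{k+1}/η_k = 0, and a_{k+1} = 2 − (η_{k+1}/η_k)(2+a_k). Then for all k ∈ ℕ, η_k · Σ_{i=1}^k (2a_i/η_i) = 2 + a_k. -/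
open Filter Topology

/-- For the `q = 1` energy recurrence sequences, `ηₖ · Σ_{i=1}^k (2aᵢ/ηᵢ) = 2 + aₖ`. -/
theorem stmt15 (a η : ℕ → ℝ)
    (ha1 : a 1 = 2) (hη1 : η 1 = 1)
    (hpos : ∀ k ≥ 1, (0 < a k ∧ a k ≤ 2) ∧ (0 < η k ∧ η k ≤ 1))
    (hηdec : ∀ k ≥ 1, 0 < η (k + 1) ∧ η (k + 1) < η k)
    (heq : ∀ k ≥ 1, (2 / (2 + a k)) * Real.log (η k / η (k + 1)) - 1 + η (k + 1) / η k = 0)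
    (ha : ∀ k ≥ 1, a (k + 1) = 2 - (η (k + 1) / η k) * (2 + a k)) :
    ∀ k ≥ 1, η k * ∑ i ∈ Finset.Icc 1 k, 2 * a i / η i = 2 + a k := by
  intro k hk
  induction k, hk using Nat.le_induction with
  | base => norm_num [ha1, hη1]
  | succ k hk ih =>
    have hηk : η k ≠ 0 := ne_of_gt (hpos k hk).2.1
    have hηk1 : η (k + 1) ≠ 0 := ne_of_gt (hηdec k hk).1
    rw [Finset.sum_Icc_succ_top (by omega : 1 ≤ k + 1), mul_add,
      mul_div_cancel₀ _ hηk1]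
    have hS : η (k + 1) * ∑ i ∈ Finset.Icc 1 k, 2 * a i / η i
        = (η (k + 1) / η k) * (2 + a k) := by
      rw [← ih]; field_simp
    rw [hS, ha k hk]
    ring
end

section
/- Let g ∈ C²([t₀,∞)) with g', g'' > 0, g(t) → ∞, g'(t) → ∞, g'(t)²/(g(t)g''(t)) → q ∈ [1,∞), and t·g'(t)/g(t) → p ∈ (1,∞] as t → ∞, with 1/p + 1/q = 1. Set f(t) = e^{g(t)} and F(t) = ∫₀^t f(s) ds (extending f continuously below t₀). Then limsup_{t→∞} (d/dt)[F(t)·log F(t)/f(t)] ≤ 1/p (where 1/∞ = 0). -/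
open Filter Topology


/-- From a pointwise `HasDerivAt` with nonnegative derivative on `Ici T`,
conclude `φ T ≤ φ t`. -/
lemma aux_mono {φ ψ : ℝ → ℝ} {T : ℝ}
    (hd : ∀ t ∈ Set.Ici T, HasDerivAt φ (ψ t) t)
    (hn : ∀ t ∈ Set.Ici T, 0 ≤ ψ t) :
    ∀ t ∈ Set.Ici T, φ T ≤ φ t := by
  intro t ht
  have hmono : MonotoneOn φ (Set.Ici T) := by
    apply monotoneOn_of_deriv_nonneg (convex_Ici T)
    · exact fun x hx => (hd x hx).continuousAt.continuousWithinAt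
    · intro x hx
      rw [interior_Ici] at hx
      exact (hd x (Set.Ioi_subset_Ici_self hx)).differentiableAt.differentiableWithinAt
    · intro x hx
      rw [interior_Ici] at hx
      rw [(hd x (Set.Ioi_subset_Ici_self hx)).deriv]
      exact hn x (Set.Ioi_subset_Ici_self hx)
  exact hmono Set.self_mem_Ici ht ht

/-- Differentiability of `g` and `deriv g` at points right of `t₀`. -/
lemma aux_derivs {t₀ : ℝ} {g : ℝ → ℝ} (hg : ContDiffOn ℝ 2 g (Set.Ici t₀)) :
    ∀ t ∈ Set.Ioi t₀, HasDerivAt g (deriv g t) t ∧ HasDerivAt (deriv g) (deriv (deriv g) t) t := by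
  have hopen : IsOpen (Set.Ioi t₀) := isOpen_Ioi
  have hg2 : ContDiffOn ℝ 2 g (Set.Ioi t₀) := hg.mono Set.Ioi_subset_Ici_self
  have h2 : (2 : WithTop ℕ∞) = (1 : WithTop ℕ∞) + 1 := by norm_num
  rw [h2, contDiffOn_succ_iff_deriv_of_isOpen hopen] at hg2
  obtain ⟨hd1, -, hd2⟩ := hg2
  intro t ht
  constructor
  · exact (hd1.differentiableAt (hopen.mem_nhds ht)).hasDerivAt
  · exact (((hd2.differentiableOn (by norm_num)).differentiableAt
      (hopen.mem_nhds ht))).hasDerivAt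


lemma aux_sqrt_log {x : ℝ} (hx : 1 ≤ x) : Real.log x ≤ 2 * Real.sqrt x := by
  have h0 : (0:ℝ) < x := by linarith
  have hs : 0 < Real.sqrt x := Real.sqrt_pos.mpr h0
  have h1 : Real.log (Real.sqrt x) ≤ Real.sqrt x - 1 := Real.log_le_sub_one_of_pos hs
  have h2 : Real.log (Real.sqrt x) = Real.log x / 2 := Real.log_sqrt h0.le
  nlinarith [Real.sqrt_nonneg x]

lemma aux_logbound {g : ℝ → ℝ} (hgtop : Tendsto g atTop atTop) (C : ℝ) {η : ℝ} (hη : 0 < η) :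
    ∀ᶠ t in atTop, 2 * Real.log (g t) + C ≤ η * g t := by
  set K : ℝ := max 1 ((5 + |C|)/η) with hK
  have hK1 : 1 ≤ K := le_max_left _ _
  have hK2 : (5 + |C|)/η ≤ K := le_max_right _ _
  filter_upwards [hgtop.eventually_ge_atTop (max 1 (K^2))] with t ht
  have hg1 : 1 ≤ g t := le_trans (le_max_left _ _) ht
  have hgK : K^2 ≤ g t := le_trans (le_max_right _ _) ht
  have hlog : Real.log (g t) ≤ 2 * Real.sqrt (g t) := aux_sqrt_log hg1
  set s := Real.sqrt (g t) with hs
  have hs0 : 0 ≤ s := Real.sqrt_nonneg _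
  have hs2 : s^2 = g t := Real.sq_sqrt (by linarith)
  have hsK : K ≤ s := by nlinarith
  have h5 : 5 + |C| ≤ η * K := by
    rw [div_le_iff₀ hη] at hK2; linarith [hK2]
  have hCabs : C ≤ |C| := le_abs_self C
  have hs1 : 1 ≤ s := le_trans hK1 hsK
  have e1 : (5 + |C|) * s ≤ (η * K) * s := mul_le_mul_of_nonneg_right h5 hs0
  have e2 : η * K * s ≤ η * s * s := by nlinarith [mul_le_mul_of_nonneg_left hsK (mul_nonneg hη.le hs0)]
  have e3 : C ≤ |C| * s := by nlinarith [abs_nonneg C]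
  nlinarith




lemma aux_logderiv {t₀ q : ℝ} {g : ℝ → ℝ} (hg : ContDiffOn ℝ 2 g (Set.Ici t₀))
    (hg' : ∀ t ≥ t₀, 0 < deriv g t)
    (hgtop : Tendsto g atTop atTop) (hq : 1 ≤ q)
    (hratio : Tendsto (fun t => (deriv g t) ^ 2 / (g t * deriv (deriv g) t)) atTop (𝓝 q)) :
    ∃ C, ∀ᶠ t in atTop, Real.log (deriv g t) ≤ 2 * Real.log (g t) + C := by
  have hev : ∀ᶠ t in atTop, (1/2:ℝ) < (deriv g t)^2/(g t * deriv (deriv g) t) :=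
    hratio.eventually (lt_mem_nhds (by linarith))
  obtain ⟨T, hT⟩ := eventually_atTop.mp
    (hev.and ((hgtop.eventually_ge_atTop 1).and (eventually_gt_atTop t₀)))
  set φ : ℝ → ℝ := fun t => 2 * Real.log (g t) - Real.log (deriv g t) with hφ
  set ψ : ℝ → ℝ := fun t => 2 * (deriv g t / g t) - deriv (deriv g) t / deriv g t with hψ
  have hkey : ∀ t ∈ Set.Ici T, φ T ≤ φ t := by
    apply aux_mono (ψ := ψ)
    · intro t ht
      obtain ⟨hr, hg1, ht0⟩ := hT t ht
      have hgpos : (0:ℝ) < g t := by linarith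
      have hg'pos : 0 < deriv g t := hg' t ht0.le
      obtain ⟨hd1, hd2⟩ := aux_derivs hg t ht0
      have h1 : HasDerivAt (fun s => 2 * Real.log (g s))
          (2 * (deriv g t / g t)) t := (hd1.log hgpos.ne').const_mul 2
      have h2 : HasDerivAt (fun s => Real.log (deriv g s))
          (deriv (deriv g) t / deriv g t) t := hd2.log hg'pos.ne'
      exact h1.sub h2
    · intro t ht
      obtain ⟨hr, hg1, ht0⟩ := hT t ht
      have hgpos : (0:ℝ) < g t := by linarith
      have hg'pos : 0 < deriv g t := hg' t ht0.le
      have hg''pos : 0 < g t * deriv (deriv g) t := by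
        by_contra h
        push_neg at h
        have : (deriv g t)^2 / (g t * deriv (deriv g) t) ≤ 0 :=
          div_nonpos_of_nonneg_of_nonpos (sq_nonneg _) h
        linarith
      have key : g t * deriv (deriv g) t < 2 * (deriv g t)^2 := by
        have := (lt_div_iff₀ hg''pos).mp hr
        nlinarith
      have hg''pos' : 0 < deriv (deriv g) t := by
        by_contra h
        push_neg at h
        nlinarith
      show 0 ≤ 2 * (deriv g t / g t) - deriv (deriv g) t / deriv g t
      have e : 2 * (deriv g t / g t) - deriv (deriv g) t / deriv g t
          = (2*(deriv g t)^2 - g t * deriv (deriv g) t)/(g t * deriv g t) := by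
        field_simp
      rw [e]
      apply div_nonneg (by linarith) (by positivity)
  refine ⟨-(φ T), ?_⟩
  filter_upwards [eventually_ge_atTop T] with t ht
  have := hkey t ht
  simp only [hφ] at this ⊢
  linarith

lemma aux_loggrowth {t₀ q : ℝ} {g : ℝ → ℝ} (hg : ContDiffOn ℝ 2 g (Set.Ici t₀))
    (hg' : ∀ t ≥ t₀, 0 < deriv g t)
    (hgtop : Tendsto g atTop atTop) (hq : 1 ≤ q)
    (hratio : Tendsto (fun t => (deriv g t) ^ 2 / (g t * deriv (deriv g) t)) atTop (𝓝 q))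
    {η : ℝ} (hη : 0 < η) :
    ∀ᶠ t in atTop, Real.log (deriv g t) ≤ η * g t ∧ Real.log (g t) ≤ η * g t := by
  obtain ⟨C, hC⟩ := aux_logderiv hg hg' hgtop hq hratio
  have hb := aux_logbound hgtop C hη
  have hb0 := aux_logbound hgtop 0 hη
  filter_upwards [hC, hb, hb0, hgtop.eventually_ge_atTop 1] with t h1 h2 h3 h4
  have hlogg : 0 ≤ Real.log (g t) := Real.log_nonneg h4
  exact ⟨by linarith, by linarith⟩



-- S4 : lower bound on F
lemma aux_S4 {t₀ q : ℝ} {g : ℝ → ℝ} {F : ℝ → ℝ} {t₁ : ℝ}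
    (hg : ContDiffOn ℝ 2 g (Set.Ici t₀))
    (hg' : ∀ t ≥ t₀, 0 < deriv g t)
    (hgtop : Tendsto g atTop atTop) (hq : 1 ≤ q)
    (hratio : Tendsto (fun t => (deriv g t) ^ 2 / (g t * deriv (deriv g) t)) atTop (𝓝 q))
    (ht₁ : t₀ ≤ t₁)
    (hFder : ∀ t > t₁, HasDerivAt F (Real.exp (g t)) t)
    {η : ℝ} (hη : 0 < η) (hη2 : η ≤ 1/2) :
    ∀ᶠ t in atTop, Real.exp ((1-η) * g t) ≤ F t ∧ 2 ≤ F t := by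
  have hlg := aux_loggrowth hg hg' hgtop hq hratio (show 0 < η/2 by positivity)
  obtain ⟨T, hT⟩ := eventually_atTop.mp
    (hlg.and ((hgtop.eventually_ge_atTop (2*Real.log 2/η)).and (eventually_gt_atTop t₁)))
  have hd : ∀ t ∈ Set.Ici T, HasDerivAt (fun t => F t - 2*Real.exp ((1-η)*g t))
      (Real.exp (g t) - 2*(Real.exp ((1-η)*g t) * ((1-η)*deriv g t))) t := by
    intro t ht
    obtain ⟨-, -, htt₁⟩ := hT t ht
    have hd1 := (aux_derivs hg t (lt_of_le_of_lt ht₁ htt₁)).1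
    exact (hFder t htt₁).sub (((hd1.const_mul (1-η)).exp).const_mul 2)
  have hn : ∀ t ∈ Set.Ici T, 0 ≤ Real.exp (g t) - 2*(Real.exp ((1-η)*g t) * ((1-η)*deriv g t)) := by
    intro t ht
    obtain ⟨⟨hlg', -⟩, hglb, htt₁⟩ := hT t ht
    have hg'pos : 0 < deriv g t := hg' t (le_trans ht₁ htt₁.le)
    have h2g' : 2 * deriv g t ≤ Real.exp (η * g t) := by
      rw [← Real.exp_log (by positivity : (0:ℝ) < 2 * deriv g t), Real.exp_le_exp,
        Real.log_mul (by norm_num) hg'pos.ne']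
      have hl2 : Real.log 2 ≤ (η/2) * g t := by
        rw [div_le_iff₀ hη] at hglb
        nlinarith
      linarith [hlg']
    have hsplit : Real.exp (g t) = Real.exp ((1-η)*g t) * Real.exp (η * g t) := by
      rw [← Real.exp_add]; ring_nf
    rw [hsplit, sub_nonneg]
    have hX : (0:ℝ) < Real.exp ((1-η)*g t) := Real.exp_pos _
    have h1 : 2*((1-η)*deriv g t) ≤ 2 * deriv g t := by nlinarith
    calc 2*(Real.exp ((1-η)*g t) * ((1-η)*deriv g t))
        = Real.exp ((1-η)*g t) * (2*((1-η)*deriv g t)) := by ring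
      _ ≤ Real.exp ((1-η)*g t) * (2*deriv g t) := by
          exact mul_le_mul_of_nonneg_left h1 hX.le
      _ ≤ Real.exp ((1-η)*g t) * Real.exp (η * g t) := by
          exact mul_le_mul_of_nonneg_left h2g' hX.le
  have hmon := aux_mono hd hn
  set C : ℝ := F T - 2*Real.exp ((1-η)*g T) with hC
  filter_upwards [eventually_ge_atTop T,
    hgtop.eventually_ge_atTop (2*Real.log (|C| + 2)), hgtop.eventually_ge_atTop 0]
    with t ht hgl hg0
  have hX : Real.exp ((1-η)*g t) ≥ |C| + 2 := by
    have h1 : Real.log (|C| + 2) ≤ (1-η) * g t := by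
      have h2 : (1/2:ℝ) ≤ 1 - η := by linarith
      nlinarith
    calc |C| + 2 = Real.exp (Real.log (|C| + 2)) :=
          (Real.exp_log (by positivity)).symm
      _ ≤ Real.exp ((1-η)*g t) := Real.exp_le_exp.mpr h1
  have hm := hmon t ht
  have habs : C ≥ -|C| := neg_abs_le C
  constructor
  · linarith [abs_nonneg C]
  · linarith [abs_nonneg C]


set_option maxHeartbeats 1000000 in
lemma aux_S5 {t₀ q : ℝ} {g : ℝ → ℝ} {F : ℝ → ℝ} {t₁ : ℝ}
    (hg : ContDiffOn ℝ 2 g (Set.Ici t₀))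
    (hg' : ∀ t ≥ t₀, 0 < deriv g t)
    (hg'' : ∀ t ≥ t₀, 0 < deriv (deriv g) t)
    (hgtop : Tendsto g atTop atTop) (hq : 1 ≤ q)
    (hratio : Tendsto (fun t => (deriv g t) ^ 2 / (g t * deriv (deriv g) t)) atTop (𝓝 q))
    (ht₁ : t₀ ≤ t₁)
    (hFder : ∀ t > t₁, HasDerivAt F (Real.exp (g t)) t)
    {η : ℝ} (hη : 0 < η) (hηq : η ≤ 1/(2*q)) :
    ∀ᶠ t in atTop, 1 + (1/q - η)/(g t) ≤ deriv g t * F t / Real.exp (g t) := by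
  have hq0 : (0:ℝ) < q := lt_of_lt_of_le one_pos hq
  set a : ℝ := 1/q - η with ha
  set c : ℝ := 1/q - η/2 with hc
  have hiq : (0:ℝ) < 1/q := by positivity
  have hη1q : η < 1/q := lt_of_le_of_lt hηq (by rw [div_lt_div_iff₀ (by positivity) hq0]; linarith)
  have hc0 : 0 < c := by rw [hc]; linarith
  have ha0 : 0 ≤ a := by rw [ha]; linarith
  have hac : a + η/2 = c := by rw [ha, hc]; ring
  have hinv : Tendsto (fun t => g t * deriv (deriv g) t / (deriv g t)^2) atTop (𝓝 q⁻¹) := by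
    have := hratio.inv₀ hq0.ne'
    simpa only [inv_div] using this
  have hratlb : ∀ᶠ t in atTop, c < g t * deriv (deriv g) t / (deriv g t)^2 :=
    hinv.eventually (lt_mem_nhds (by rw [hc, ← one_div]; linarith))
  obtain ⟨T, hT⟩ := eventually_atTop.mp
    (hratlb.and ((hgtop.eventually_ge_atTop 1).and (eventually_gt_atTop t₁)))
  set Φ : ℝ → ℝ := fun t => F t - Real.exp (g t)/deriv g t
      - c * (Real.exp (g t)/(g t * deriv g t)) with hΦ
  set ψ : ℝ → ℝ := fun t => Real.exp (g t) * deriv (deriv g) t/(deriv g t)^2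
      - c * (Real.exp (g t)/g t - Real.exp (g t)/(g t)^2
        - Real.exp (g t) * deriv (deriv g) t/(g t * (deriv g t)^2)) with hψ
  have hd : ∀ t ∈ Set.Ici T, HasDerivAt Φ (ψ t) t := by
    intro t ht
    obtain ⟨-, hg1, htt₁⟩ := hT t ht
    have ht0 : t₀ < t := lt_of_le_of_lt ht₁ htt₁
    obtain ⟨hd1, hd2⟩ := aux_derivs hg t ht0
    have hgpos : (0:ℝ) < g t := by linarith
    have hg'pos : 0 < deriv g t := hg' t ht0.le
    have hE := hd1.exp
    have h1 := hE.div hd2 hg'pos.ne'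
    have hgg' := hd1.mul hd2
    have h2 := hE.div hgg' (by positivity : g t * deriv g t ≠ 0)
    have htot := ((hFder t htt₁).sub h1).sub (h2.const_mul c)
    convert htot using 1
    · rfl
    · rfl
    · rfl
    rw [hψ]
    simp only [Pi.mul_apply]
    field_simp
    ring
  have hn : ∀ t ∈ Set.Ici T, 0 ≤ ψ t := by
    intro t ht
    obtain ⟨hrat, hg1, htt₁⟩ := hT t ht
    have ht0 : t₀ < t := lt_of_le_of_lt ht₁ htt₁
    have hgpos : (0:ℝ) < g t := by linarith
    have hg'pos : 0 < deriv g t := hg' t ht0.le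
    have hg''pos : 0 < deriv (deriv g) t := hg'' t ht0.le
    have hEpos : 0 < Real.exp (g t) := Real.exp_pos _
    have he : (g t * deriv (deriv g) t / (deriv g t)^2) * (Real.exp (g t)/g t)
        = Real.exp (g t) * deriv (deriv g) t/(deriv g t)^2 := by
      field_simp
    have hmain : c * (Real.exp (g t)/g t) ≤ Real.exp (g t) * deriv (deriv g) t/(deriv g t)^2 := by
      rw [← he]
      exact mul_le_mul_of_nonneg_right hrat.le (by positivity)
    have hdrop : c * (Real.exp (g t)/g t - Real.exp (g t)/(g t)^2
        - Real.exp (g t) * deriv (deriv g) t/(g t * (deriv g t)^2))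
        ≤ c * (Real.exp (g t)/g t) := by
      apply mul_le_mul_of_nonneg_left _ hc0.le
      have h1 : 0 ≤ Real.exp (g t)/(g t)^2 := by positivity
      have h2 : 0 ≤ Real.exp (g t) * deriv (deriv g) t/(g t * (deriv g t)^2) := by positivity
      linarith
    rw [hψ]
    simp only
    linarith
  have hmon := aux_mono hd hn
  set M : ℝ := 2*|Φ T|/η + 1 with hM
  have hMpos : 0 < M := by positivity
  have hlg := aux_loggrowth hg hg' hgtop hq hratio (show (0:ℝ) < 1/4 by norm_num)
  filter_upwards [eventually_ge_atTop T, hlg,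
    hgtop.eventually_ge_atTop (max 1 (2*Real.log M))] with t ht hlgt hgbig
  obtain ⟨hrat, hg1, htt₁⟩ := hT t ht
  have ht0 : t₀ < t := lt_of_le_of_lt ht₁ htt₁
  have hgpos : (0:ℝ) < g t := by linarith
  have hg'pos : 0 < deriv g t := hg' t ht0.le
  have hEpos : 0 < Real.exp (g t) := Real.exp_pos _
  -- W t ≥ M
  have hW : M ≤ Real.exp (g t)/(g t * deriv g t) := by
    rw [le_div_iff₀ (by positivity)]
    rw [← Real.exp_log (show (0:ℝ) < M * (g t * deriv g t) by positivity)]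
    apply Real.exp_le_exp.mpr
    rw [Real.log_mul hMpos.ne' (by positivity), Real.log_mul hgpos.ne' hg'pos.ne']
    have h1 : Real.log (g t) ≤ (1/4) * g t := hlgt.2
    have h2 : Real.log (deriv g t) ≤ (1/4) * g t := hlgt.1
    have h3 : 2*Real.log M ≤ g t := le_trans (le_max_right _ _) hgbig
    linarith
  have hm : Φ T ≤ F t - Real.exp (g t)/deriv g t
      - c * (Real.exp (g t)/(g t * deriv g t)) := hmon t ht
  set W : ℝ := Real.exp (g t)/(g t * deriv g t) with hWdef
  have hηW : |Φ T| ≤ (η/2) * W := by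
    have : (η/2) * M ≤ (η/2) * W := mul_le_mul_of_nonneg_left hW (by positivity)
    rw [hM] at this
    have he2 : η/2 * (2*|Φ T|/η + 1) = |Φ T| + η/2 := by field_simp
    rw [he2] at this
    linarith
  have hF : Real.exp (g t)/deriv g t + a * W ≤ F t := by
    clear_value a c W M Φ ψ
    have habs : -|Φ T| ≤ Φ T := neg_abs_le _
    have hcW : c * W = a * W + (η/2) * W := by rw [← hac]; ring
    have hηW' : |Φ T| ≤ c * W - a * W := by linarith [hcW, hηW]
    linarith [hm, hηW', habs]
  rw [le_div_iff₀ hEpos]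
  have hmul := mul_le_mul_of_nonneg_left hF hg'pos.le
  have heq : deriv g t * (Real.exp (g t)/deriv g t + a * (Real.exp (g t)/(g t * deriv g t)))
      = (1 + a/g t) * Real.exp (g t) := by field_simp
  rw [hWdef] at hmul
  rw [heq] at hmul
  linarith


set_option maxHeartbeats 1000000 in
/-- Under the generalized exponential growth condition (H1) with conjugate exponents
`q ∈ [1,∞)` and `p ∈ (1,∞]` (`1/p + 1/q = 1`, so `1/p = (q−1)/q`), the function
`f = e^g` with primitive `F(t) = ∫₀^t f` satisfies
`limsup_{t→∞} (F log F / f)'(t) ≤ 1/p`, expressed as: for every `ε > 0`, eventually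
`(F log F / f)'(t) ≤ (q−1)/q + ε`. -/
theorem stmt19 (t₀ q : ℝ) (g : ℝ → ℝ)
    (hg : ContDiffOn ℝ 2 g (Set.Ici t₀))
    (hg' : ∀ t ≥ t₀, 0 < deriv g t)
    (hg'' : ∀ t ≥ t₀, 0 < deriv (deriv g) t)
    (hgtop : Tendsto g atTop atTop)
    (hg'top : Tendsto (deriv g) atTop atTop)
    (hq : 1 ≤ q)
    (hratio : Tendsto (fun t => (deriv g t) ^ 2 / (g t * deriv (deriv g) t)) atTop (𝓝 q))
    (hp : (1 < q ∧ Tendsto (fun t => t * deriv g t / g t) atTop (𝓝 (q / (q - 1)))) ∨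
      (q = 1 ∧ Tendsto (fun t => t * deriv g t / g t) atTop atTop)) :
    ∀ ε > (0:ℝ), ∀ᶠ t in atTop,
      deriv (fun s => (∫ u in (0:ℝ)..s, Real.exp (g u)) *
        Real.log (∫ u in (0:ℝ)..s, Real.exp (g u)) / Real.exp (g s)) t
        ≤ (q - 1) / q + ε := by
  intro ε hε
  have hq0 : (0:ℝ) < q := lt_of_lt_of_le one_pos hq
  set t₁ : ℝ := max t₀ 0 with ht₁def
  have ht₁0 : (0:ℝ) ≤ t₁ := le_max_right _ _
  have ht₁t₀ : t₀ ≤ t₁ := le_max_left _ _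
  by_cases hI : IntervalIntegrable (fun u => Real.exp (g u)) MeasureTheory.volume 0 t₁
  case neg =>
    filter_upwards [eventually_gt_atTop t₁] with t ht
    have hF0 : ∀ s ∈ Set.Ioi t₁, (∫ u in (0:ℝ)..s, Real.exp (g u)) = 0 := by
      intro s hs
      apply intervalIntegral.integral_undef
      intro h
      exact hI (h.mono_set (Set.uIcc_subset_uIcc Set.left_mem_uIcc
        (Set.mem_uIcc.mpr (Or.inl ⟨ht₁0, le_of_lt hs⟩))))
    have heq : (fun s => (∫ u in (0:ℝ)..s, Real.exp (g u)) *
        Real.log (∫ u in (0:ℝ)..s, Real.exp (g u)) / Real.exp (g s))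
        =ᶠ[𝓝 t] (fun _ => (0:ℝ)) := by
      filter_upwards [isOpen_Ioi.mem_nhds ht] with s hs
      rw [hF0 s hs]
      simp
    rw [heq.deriv_eq, deriv_const]
    have h1 : 0 ≤ (q-1)/q := div_nonneg (by linarith) hq0.le
    linarith
  case pos =>
    have hgc : ContinuousOn (fun u => Real.exp (g u)) (Set.Ici t₀) :=
      Real.continuous_exp.comp_continuousOn hg.continuousOn
    have hInt : ∀ t ≥ t₁, IntervalIntegrable (fun u => Real.exp (g u))
        MeasureTheory.volume 0 t := by
      intro t ht
      refine hI.trans ?_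
      apply ContinuousOn.intervalIntegrable
      apply hgc.mono
      rw [Set.uIcc_of_le ht]
      exact fun x hx => le_trans ht₁t₀ hx.1
    have hFder : ∀ t > t₁, HasDerivAt (fun s => ∫ u in (0:ℝ)..s, Real.exp (g u))
        (Real.exp (g t)) t := by
      intro t ht
      have ht0 : t₀ < t := lt_of_le_of_lt ht₁t₀ ht
      exact intervalIntegral.integral_hasDerivAt_right (hInt t ht.le)
        (((hgc.mono Set.Ioi_subset_Ici_self).stronglyMeasurableAtFilter isOpen_Ioi) t ht0)
        (hgc.continuousAt (Ici_mem_nhds ht0))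
    set η : ℝ := min (ε/2) (1/(2*q)) with hηdef
    have hη : 0 < η := lt_min (by linarith) (by positivity)
    have hηε : η ≤ ε/2 := min_le_left _ _
    have hηq : η ≤ 1/(2*q) := min_le_right _ _
    clear_value η
    have hη2 : η ≤ 1/2 := by
      refine le_trans hηq ?_
      rw [div_le_div_iff₀ (by positivity) (by norm_num)]
      linarith
    have hS4 := aux_S4 hg hg' hgtop hq hratio ht₁t₀ hFder hη hη2
    have hS5 := aux_S5 hg hg' hg'' hgtop hq hratio ht₁t₀ hFder hη hηq
    filter_upwards [hS4, hS5, eventually_gt_atTop t₁, hgtop.eventually_ge_atTop 1]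
      with t hS4t hS5t ht hg1
    obtain ⟨hFlb, hF2⟩ := hS4t
    have ht0 : t₀ < t := lt_of_le_of_lt ht₁t₀ ht
    have hgpos : (0:ℝ) < g t := by linarith
    have hg'pos : 0 < deriv g t := hg' t ht0.le
    have hEpos : 0 < Real.exp (g t) := Real.exp_pos _
    have hFvpos : (0:ℝ) < ∫ u in (0:ℝ)..t, Real.exp (g u) := by linarith
    have hF := hFder t ht
    have hnum := hF.mul (hF.log hFvpos.ne')
    have hden : HasDerivAt (fun s => Real.exp (g s)) (Real.exp (g t) * deriv g t) t :=
      ((aux_derivs hg t ht0).1).exp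
    have hD : HasDerivAt (fun s => (∫ u in (0:ℝ)..s, Real.exp (g u)) *
        Real.log (∫ u in (0:ℝ)..s, Real.exp (g u)) / Real.exp (g s))
        (((Real.exp (g t) * Real.log (∫ u in (0:ℝ)..t, Real.exp (g u)) +
            (∫ u in (0:ℝ)..t, Real.exp (g u)) *
              (Real.exp (g t) / ∫ u in (0:ℝ)..t, Real.exp (g u))) * Real.exp (g t) -
          (∫ u in (0:ℝ)..t, Real.exp (g u)) *
            Real.log (∫ u in (0:ℝ)..t, Real.exp (g u)) *
            (Real.exp (g t) * deriv g t)) / (Real.exp (g t))^2) t := by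
      exact hnum.div hden hEpos.ne'
    rw [hD.deriv]
    -- abbreviations
    set Fv : ℝ := ∫ u in (0:ℝ)..t, Real.exp (g u) with hFv
    set E : ℝ := Real.exp (g t) with hE
    set L : ℝ := Real.log Fv with hL
    set G : ℝ := g t with hG
    set G' : ℝ := deriv g t with hG'
    have hDval : ((E * L + Fv * (E / Fv)) * E - Fv * L * (E * G')) / E^2
        = 1 + L - (G' * Fv / E) * L := by
      field_simp
      ring
    rw [hDval]
    have hLlb : (1-η) * G ≤ L := by
      rw [hL]
      rw [Real.le_log_iff_exp_le hFvpos]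
      exact hFlb
    have hYlb : 1 + (1/q - η)/G ≤ G' * Fv / E := hS5t
    clear_value Fv E L G G'
    have hL0 : 0 ≤ L := by nlinarith
    have ha0 : 0 ≤ 1/q - η := by
      have : 1/(2*q) ≤ 1/q := by
        rw [div_le_div_iff₀ (by positivity) hq0]
        nlinarith
      linarith
    have haG : 0 ≤ (1/q - η)/G := div_nonneg ha0 (by linarith)
    have hprod : (1-η) * G * ((1/q - η)/G) ≤ L * (G' * Fv / E - 1) := by
      apply mul_le_mul hLlb (by linarith) haG hL0
    have heq2 : (1-η) * G * ((1/q - η)/G) = (1-η) * (1/q - η) := by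
      field_simp
    rw [heq2] at hprod
    have hkey : 1 + L - (G' * Fv / E) * L ≤ 1 - (1-η) * (1/q - η) := by
      have h9 : L * (G' * Fv / E - 1) = (G' * Fv / E) * L - L := by ring
      linarith [hprod, h9 ▸ hprod]
    refine le_trans hkey ?_
    have hq1 : (q-1)/q = 1 - 1/q := by field_simp
    rw [hq1]
    have hdq : η/q ≤ η := div_le_self hη.le hq
    have hη4 : η * (1/q) ≤ η := by
      rw [mul_one_div]
      exact hdq
    nlinarith [sq_nonneg η]
end
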